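/- arXiv:2605.25089 — 8 statements merged into one kernel-verified Lean document; each statement's English description precedes it below -/
import Mathlib

section
/- Let Q₁, Q₂ be commuting orthogonal projections and X a Hermitian operator with νI ⪯ X ⪯ μI for 0 < ν ≤ μ. Then Q₁XQ₂ + Q₂XQ₁ ⪰ 2ν Q₁Q₂ − (μ−ν)(Q₁ + Q₂) ⪰ −(μ−ν)(Q₁+Q₂). -/
open Matrix
open scoped ComplexOrder

/-!
Expanding the three sandwiches, with `Q₁² = Q₁`, `Q₂² = Q₂` and `Q₁Q₂ = Q₂Q₁`, gives
`Q₁XQ₂ + Q₂XQ₁ - 2ν Q₁Q₂ + (μ-ν)(Q₁+Q₂) = (Q₁+Q₂)(X-ν)(Q₁+Q₂) + Q₁(μ-X)Q₁ + Q₂(μ-X)Q₂`,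
a sum of congruences of positive semidefinite matrices. The second inequality says
`2ν Q₁Q₂ ⪰ 0`, and `Q₁Q₂` is itself an orthogonal projection.
-/

theorem mul_mul_add_mul_mul_sub_eq_of_commute {R A : Type*} [CommRing R] [Ring A] [Algebra R A]
    {P Q : A} (hP : IsIdempotentElem P) (hQ : IsIdempotentElem Q) (hPQ : Commute P Q)
    (X : A) (a b : R) :
    P * X * Q + Q * X * P - ((2 * a) • (P * Q) - (b - a) • (P + Q))
      = (P + Q) * (X - a • 1) * (P + Q) + (P * (b • 1 - X) * P + Q * (b • 1 - X) * Q) := by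
  simp only [mul_sub, sub_mul, mul_add, add_mul, smul_mul_assoc, mul_smul_comm, mul_one,
    hP.eq, hQ.eq, ← hPQ.eq]
  module

namespace Matrix

variable {m R : Type*} [Fintype m] [Ring R] [PartialOrder R] [StarRing R]

theorem PosSemidef.mul_mul_same_of_isHermitian {A P : Matrix m m R} (hA : A.PosSemidef)
    (hP : P.IsHermitian) : (P * A * P).PosSemidef := by
  simpa only [hP.eq] using hA.conjTranspose_mul_mul_same P

theorem PosSemidef.of_isStarProjection [StarOrderedRing R] {P : Matrix m m R}
    (hP : IsStarProjection P) : P.PosSemidef := by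
  simpa only [← star_eq_conjTranspose, hP.isSelfAdjoint.star_eq, hP.isIdempotentElem.eq]
    using posSemidef_conjTranspose_mul_self P

end Matrix

theorem stmt6_general {n : ℕ} (ν μ : ℝ) (hν : 0 < ν)
    (Q₁ Q₂ X : Matrix (Fin n) (Fin n) ℂ)
    (h1 : Q₁.IsHermitian) (h1p : Q₁ * Q₁ = Q₁)
    (h2 : Q₂.IsHermitian) (h2p : Q₂ * Q₂ = Q₂)
    (hcomm : Q₁ * Q₂ = Q₂ * Q₁)
    (hlo : (X - (ν : ℂ) • 1).PosSemidef) (hhi : ((μ : ℂ) • 1 - X).PosSemidef) :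
    (Q₁ * X * Q₂ + Q₂ * X * Q₁
        - (((2 * ν : ℝ) : ℂ) • (Q₁ * Q₂) - ((μ - ν : ℝ) : ℂ) • (Q₁ + Q₂))).PosSemidef
    ∧ ((((2 * ν : ℝ) : ℂ) • (Q₁ * Q₂) - ((μ - ν : ℝ) : ℂ) • (Q₁ + Q₂))
        - (-(((μ - ν : ℝ) : ℂ) • (Q₁ + Q₂)))).PosSemidef := by
  constructor
  · push_cast
    rw [mul_mul_add_mul_mul_sub_eq_of_commute h1p h2p hcomm]
    exact (hlo.mul_mul_same_of_isHermitian (h1.add h2)).add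
      ((hhi.mul_mul_same_of_isHermitian h1).add (hhi.mul_mul_same_of_isHermitian h2))
  · rw [sub_neg_eq_add, sub_add_cancel]
    have hproj : IsStarProjection (Q₁ * Q₂) := IsStarProjection.mul ⟨h1p, h1⟩ ⟨h2p, h2⟩ hcomm
    exact (PosSemidef.of_isStarProjection hproj).smul
      (Complex.zero_le_real.mpr (by positivity))

/-- For commuting orthogonal projections `Q₁, Q₂` and Hermitian `X` with
`νI ⪯ X ⪯ μI`, `0 < ν ≤ μ`, one has
`Q₁XQ₂ + Q₂XQ₁ ⪰ 2ν Q₁Q₂ − (μ−ν)(Q₁+Q₂) ⪰ −(μ−ν)(Q₁+Q₂)`. -/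
theorem stmt6 {n : ℕ} (ν μ : ℝ) (hν : 0 < ν) (hνμ : ν ≤ μ)
    (Q₁ Q₂ X : Matrix (Fin n) (Fin n) ℂ)
    (h1 : Q₁.IsHermitian) (h1p : Q₁ * Q₁ = Q₁)
    (h2 : Q₂.IsHermitian) (h2p : Q₂ * Q₂ = Q₂)
    (hcomm : Q₁ * Q₂ = Q₂ * Q₁)
    (hX : X.IsHermitian)
    (hlo : (X - (ν : ℂ) • 1).PosSemidef) (hhi : ((μ : ℂ) • 1 - X).PosSemidef) :
    (Q₁ * X * Q₂ + Q₂ * X * Q₁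
        - (((2 * ν : ℝ) : ℂ) • (Q₁ * Q₂) - ((μ - ν : ℝ) : ℂ) • (Q₁ + Q₂))).PosSemidef
    ∧ ((((2 * ν : ℝ) : ℂ) • (Q₁ * Q₂) - ((μ - ν : ℝ) : ℂ) • (Q₁ + Q₂))
        - (-(((μ - ν : ℝ) : ℂ) • (Q₁ + Q₂)))).PosSemidef :=
  stmt6_general ν μ hν Q₁ Q₂ X h1 h1p h2 h2p hcomm hlo hhi
end

section
/- Let h₁, …, h_m be positive semi-definite operators on a finite-dimensional Hilbert space, and suppose there exist constants a > 0 and b ≥ 0 such that (i) h_e² ⪰ a·h_e for each e, (ii) for every pair e₁ ≠ e₂ either h_{e₁}h_{e₂} + h_{e₂}h_{e₁} ⪰ 0 or h_{e₁}h_{e₂} + h_{e₂}h_{e₁} ⪰ −b(h_{e₁} + h_{e₂}), where for each e the number of e' with the latter (non-commuting) relation is at most z. If b·z < a, then H = Σ_e h_e satisfies H² ⪰ (a − bz)·H; in particular the smallest nonzero eigenvalue of H is at least a − bz. -/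
/-!
Since `2 H² = Σ_{i,j} (h_i h_j + h_j h_i)`, it suffices to bound each anticommutator from below
by `c_ij (h_i + h_j)` for a symmetric weight `c`: `c_ii = a`, `c_ij = -b` when `i` and `j` are
bad for each other, and `c_ij = 0` otherwise. Summing gives `2 H² ⪰ 2 Σ_i (Σ_j c_ij) h_i`, and
every row sum is at least `a - b z`, so `H² ⪰ (a - b z) H` because the `h_i` are positive.
For an eigenvalue `μ` of `H`, the number `μ² - (a - b z) μ` lies in the spectrum of the positive
operator `H² - (a - b z) H`, hence is nonnegative; as `μ ≥ 0`, either `μ = 0` or `μ ≥ a - b z`.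
-/

open Finset Matrix Polynomial
open scoped ComplexOrder MatrixOrder

theorem two_nsmul_sum_mul_sum {R ι : Type*} [NonUnitalNonAssocSemiring R] (s : Finset ι)
    (x : ι → R) :
    2 • ((∑ i ∈ s, x i) * ∑ i ∈ s, x i) = ∑ i ∈ s, ∑ j ∈ s, (x i * x j + x j * x i) := by
  simp only [sum_add_distrib, sum_mul_sum, two_nsmul]
  rw [sum_comm (f := fun i j => x j * x i)]

theorem sum_sum_smul_add_of_symm {M ι : Type*} [AddCommMonoid M] [Module ℝ M] (s : Finset ι)
    (c : ι → ι → ℝ) (hc : ∀ i j, c i j = c j i) (x : ι → M) :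
    ∑ i ∈ s, ∑ j ∈ s, c i j • (x i + x j) = 2 • ∑ i ∈ s, (∑ j ∈ s, c i j) • x i := by
  simp only [smul_add, sum_add_distrib, sum_smul, two_nsmul]
  rw [sum_comm (f := fun i j => c i j • x j)]
  simp_rw [hc]

section OrderedRing

variable {A ι : Type*} [Ring A] [PartialOrder A] [IsOrderedAddMonoid A] [Module ℝ A]
  [PosSMulMono ℝ A] [Fintype ι]

theorem smul_sum_le_sum_mul_sum_of_smul_add_le {x : ι → A} (hx : ∀ i, 0 ≤ x i)
    (c : ι → ι → ℝ) (hc : ∀ i j, c i j = c j i)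
    (hcx : ∀ i j, c i j • (x i + x j) ≤ x i * x j + x j * x i)
    {μ : ℝ} (hμ : ∀ i, μ ≤ ∑ j, c i j) :
    μ • ∑ i, x i ≤ (∑ i, x i) * ∑ i, x i := by
  suffices h2 : 2 • (μ • ∑ i, x i) ≤ 2 • ((∑ i, x i) * ∑ i, x i) by
    rwa [← Nat.cast_smul_eq_nsmul ℝ, ← Nat.cast_smul_eq_nsmul ℝ,
      smul_le_smul_iff_of_pos_left (by norm_num)] at h2
  calc 2 • (μ • ∑ i, x i) ≤ 2 • ∑ i, (∑ j, c i j) • x i := by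
        rw [smul_sum]
        gcongr with i
        · exact hx i
        · exact hμ i
    _ = ∑ i, ∑ j, c i j • (x i + x j) := (sum_sum_smul_add_of_symm _ c hc x).symm
    _ ≤ ∑ i, ∑ j, (x i * x j + x j * x i) := by gcongr with i _ j _; exact hcx i j
    _ = 2 • ((∑ i, x i) * ∑ i, x i) := (two_nsmul_sum_mul_sum _ x).symm

theorem smul_sum_le_sum_mul_sum {x : ι → A} (hx : ∀ i, 0 ≤ x i) {a b : ℝ} (hb : 0 ≤ b)
    (hsq : ∀ i, a • x i ≤ x i * x i) (bad : ι → Finset ι) {z : ℕ} (hcard : ∀ i, #(bad i) ≤ z)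
    (hgood : ∀ i j, i ≠ j → j ∉ bad i → 0 ≤ x i * x j + x j * x i)
    (hbad : ∀ i j, i ≠ j → j ∈ bad i → -(b • (x i + x j)) ≤ x i * x j + x j * x i) :
    (a - b * z) • ∑ i, x i ≤ (∑ i, x i) * ∑ i, x i := by
  classical
  -- Only mutually bad pairs are charged `-b`: if `j ∉ bad i` or `i ∉ bad j`, `hgood` applies.
  let R : ι → ι → Prop := fun i j => i ≠ j ∧ j ∈ bad i ∧ i ∈ bad j
  let c : ι → ι → ℝ := fun i j => (if i = j then a else 0) - if R i j then b else 0
  refine smul_sum_le_sum_mul_sum_of_smul_add_le hx c (fun i j => ?_) (fun i j => ?_)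
    (fun i => ?_)
  · simp only [c, R, eq_comm (a := i), ne_comm (a := i), and_comm (a := j ∈ bad i)]
  · by_cases hij : i = j
    · subst hij
      simpa [c, R, smul_add] using add_le_add (hsq i) (hsq i)
    by_cases hR : R i j
    · have hc : c i j = -b := by simp [c, hij, hR]
      rw [hc, neg_smul]
      exact hbad i j hij hR.2.1
    · simp only [c, hij, hR, if_false, sub_self, zero_smul]
      by_cases hj : j ∈ bad i
      · rw [add_comm]
        exact hgood j i (Ne.symm hij) fun hi => hR ⟨hij, hj, hi⟩
      · exact hgood i j hij hj
  · have hdeg : #{j | R i j} ≤ z :=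
      (card_le_card fun j hj => (mem_filter.mp hj).2.2.1).trans (hcard i)
    simp only [c, sum_sub_distrib, sum_ite_eq, mem_univ, if_true]
    rw [sum_ite, sum_const_zero, add_zero, sum_const, nsmul_eq_mul, mul_comm]
    gcongr

end OrderedRing

theorem le_of_mem_spectrum_of_smul_le_mul_self {A : Type*} [Ring A] [PartialOrder A]
    [AddRightMono A] [Algebra ℝ A] [NonnegSpectrumClass ℝ A] {x : A} (hx : 0 ≤ x) {c : ℝ}
    (hc : c • x ≤ x * x) {μ : ℝ} (hμ : μ ∈ spectrum ℝ x) (hμ0 : μ ≠ 0) : c ≤ μ := by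
  have hmap : μ * μ - c * μ ∈ spectrum ℝ (x * x - c • x) := by
    have := spectrum.subset_polynomial_aeval x (X * X - C c * X) ⟨μ, hμ, rfl⟩
    simpa only [eval_sub, eval_mul, eval_X, eval_C, map_sub, map_mul, aeval_X, aeval_C,
      ← Algebra.smul_def] using this
  have hquad := spectrum_nonneg_of_nonneg (sub_nonneg.mpr hc) hmap
  have hpos : 0 < μ := (spectrum_nonneg_of_nonneg hx hμ).lt_of_ne' hμ0
  nlinarith

theorem stmt7_general {n m : ℕ} (a b : ℝ) (hb : 0 ≤ b) (z : ℕ)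
    (h : Fin m → Matrix (Fin n) (Fin n) ℂ)
    (hpsd : ∀ e, (h e).PosSemidef)
    (hsq : ∀ e, (h e * h e - (a : ℂ) • h e).PosSemidef)
    (bad : Fin m → Finset (Fin m))
    (hcard : ∀ e, (bad e).card ≤ z)
    (hgood : ∀ e₁ e₂, e₁ ≠ e₂ → e₂ ∉ bad e₁ → (h e₁ * h e₂ + h e₂ * h e₁).PosSemidef)
    (hbadrel : ∀ e₁ e₂, e₁ ≠ e₂ → e₂ ∈ bad e₁ →
        (h e₁ * h e₂ + h e₂ * h e₁ - (-((b : ℂ) • (h e₁ + h e₂)))).PosSemidef) :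
    ((∑ e, h e) * (∑ e, h e) - ((a - b * z : ℝ) : ℂ) • (∑ e, h e)).PosSemidef
    ∧ ∀ μ : ℝ, (μ : ℂ) ∈ spectrum ℂ (∑ e, h e) → μ ≠ 0 → a - b * z ≤ μ := by
  have hgap : (a - b * z) • ∑ e, h e ≤ (∑ e, h e) * ∑ e, h e :=
    smul_sum_le_sum_mul_sum (fun e => (hpsd e).nonneg) hb
      (fun e => le_iff.mpr (by rw [← Complex.coe_smul]; exact hsq e)) bad hcard
      (fun e₁ e₂ hne hn => (hgood e₁ e₂ hne hn).nonneg)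
      (fun e₁ e₂ hne hin => le_iff.mpr (by rw [← Complex.coe_smul]; exact hbadrel e₁ e₂ hne hin))
  refine ⟨by rw [Complex.coe_smul]; exact hgap, fun μ hμ hμ0 => ?_⟩
  exact le_of_mem_spectrum_of_smul_le_mul_self (sum_nonneg fun e _ => (hpsd e).nonneg) hgap
    (spectrum.of_algebraMap_mem ℂ hμ) hμ0

/-- Martingale-method gap bound: if each `h e` is PSD with `h e² ⪰ a·h e`, every pair of
distinct terms either has a nonnegative anticommutator or satisfies
`h e₁ h e₂ + h e₂ h e₁ ⪰ −b(h e₁ + h e₂)` (with at most `z` such "bad" partners per `e₁`),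
and `b·z < a`, then `H = Σ h e` satisfies `H² ⪰ (a − bz)·H`, and hence every nonzero
eigenvalue of `H` is at least `a − bz`. -/
theorem stmt7 {n m : ℕ} (a b : ℝ) (ha : 0 < a) (hb : 0 ≤ b) (z : ℕ)
    (h : Fin m → Matrix (Fin n) (Fin n) ℂ)
    (hpsd : ∀ e, (h e).PosSemidef)
    (hsq : ∀ e, (h e * h e - (a : ℂ) • h e).PosSemidef)
    (bad : Fin m → Finset (Fin m))
    (hcard : ∀ e, (bad e).card ≤ z)
    (hgood : ∀ e₁ e₂, e₁ ≠ e₂ → e₂ ∉ bad e₁ → (h e₁ * h e₂ + h e₂ * h e₁).PosSemidef)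
    (hbadrel : ∀ e₁ e₂, e₁ ≠ e₂ → e₂ ∈ bad e₁ →
        (h e₁ * h e₂ + h e₂ * h e₁ - (-((b : ℂ) • (h e₁ + h e₂)))).PosSemidef)
    (hbz : b * z < a) :
    ((∑ e, h e) * (∑ e, h e) - ((a - b * z : ℝ) : ℂ) • (∑ e, h e)).PosSemidef
    ∧ ∀ μ : ℝ, (μ : ℂ) ∈ spectrum ℂ (∑ e, h e) → μ ≠ 0 → a - b * z ≤ μ :=
  stmt7_general a b hb z h hpsd hsq bad hcard hgood hbadrel
end

section
/- Let ℰ be a quantum channel (completely positive trace-preserving map) on a finite-dimensional Hilbert space whose unique fixed point among states is a pure state |ψ⟩⟨ψ|. Then the only eigenvalue of ℰ on the unit circle is 1, with eigenvector |ψ⟩⟨ψ|; i.e., every other eigenvalue λ of ℰ satisfies |λ| < 1. -/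
/-!
Write `ℰ X = ∑ K α * X * (K α)ᴴ` and `ℰ† Y = ∑ (K α)ᴴ * Y * K α` for its dual under
`(X, Y) ↦ trace (X * Y)`. Since `ℰ (ψ ψ†) = ∑ (K α ψ)(K α ψ)†` is rank one, `ψ` is a common
eigenvector of the `K α`. If `ℰ X = λ X` with `‖λ‖ = 1`, then `ℰ† Y = λ Y` for some `Y ≠ 0`, and
the Kadison–Schwarz identity `ℰ† (Yᴴ Y) - Yᴴ Y = ∑ Nαᴴ Nα`, `Nα = Y K α - λ K α Y`, evaluated
at the fixed state `ψ ψ†` gives `Nα ψ = 0`: `Y ψ` is again a common eigenvector of the `K α`.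
If `Y ψ ≠ 0`, then `(Y ψ)(Y ψ)†` is fixed up to normalization, so `Y ψ` is parallel to `ψ`,
which forces `λ = 1`. If `Y ψ = 0`, then `T = Yᴴ Y` satisfies `ℰ† T ≥ T`; the top eigenspace of
`T` is then invariant under every `K α` and carries a fixed state, which must be `ψ ψ†`,
contradicting `T ψ = 0`.

Finally, for a positive trace-preserving map the positive and negative parts of a Hermitian
fixed point are fixed (by minimality of the Jordan decomposition), so fixed points are spanned
by fixed states, and uniqueness of the fixed state makes the eigenspace of `1` one-dimensional.
-/

open Matrix
open scoped ComplexOrder MatrixOrder ComplexStarModule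

namespace Matrix

variable {m ι : Type*} [Fintype m] [Fintype ι] {Φ : Matrix m m ℂ →ₗ[ℂ] Matrix m m ℂ}

-- With the family `fun α => (K α)ᴴ` this is the dual map `ℰ†`, see `trace_krausMap_mul`.
noncomputable def krausMap (K : ι → Matrix m m ℂ) : Matrix m m ℂ →ₗ[ℂ] Matrix m m ℂ :=
  ∑ α, LinearMap.mulRight ℂ (K α)ᴴ ∘ₗ LinearMap.mulLeft ℂ (K α)

@[simp]
theorem krausMap_apply (K : ι → Matrix m m ℂ) (X : Matrix m m ℂ) :
    krausMap K X = ∑ α, K α * X * (K α)ᴴ := by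
  simp [krausMap]

theorem posSemidef_krausMap (K : ι → Matrix m m ℂ) {X : Matrix m m ℂ} (hX : X.PosSemidef) :
    (krausMap K X).PosSemidef := by
  rw [krausMap_apply]
  exact posSemidef_sum _ fun α _ => hX.mul_mul_conjTranspose_same (K α)

theorem trace_krausMap_mul (K : ι → Matrix m m ℂ) (X Y : Matrix m m ℂ) :
    (krausMap K X * Y).trace = (X * krausMap (fun α => (K α)ᴴ) Y).trace := by
  simp only [krausMap_apply, conjTranspose_conjTranspose, Finset.sum_mul, Finset.mul_sum,
    trace_sum]
  refine Finset.sum_congr rfl fun α _ => ?_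
  rw [Matrix.mul_assoc, Matrix.mul_assoc, trace_mul_comm]
  simp only [Matrix.mul_assoc]

theorem krausMap_vecMulVec (K : ι → Matrix m m ℂ) (v : m → ℂ) :
    krausMap K (vecMulVec v (star v)) = ∑ α, vecMulVec (K α *ᵥ v) (star (K α *ᵥ v)) := by
  simp [mul_vecMulVec, vecMulVec_mul, star_mulVec]

theorem exists_eigenvector_of_trace_mul_eq {f g : Module.End ℂ (Matrix m m ℂ)}
    (hfg : ∀ X Y, (f X * Y).trace = (X * g Y).trace) {μ : ℂ} {X : Matrix m m ℂ} (hX : X ≠ 0)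
    (hfX : f X = μ • X) : ∃ Y, Y ≠ 0 ∧ g Y = μ • Y := by
  by_contra! h
  have hinj : Function.Injective (g - μ • LinearMap.id : Module.End ℂ (Matrix m m ℂ)) :=
    (injective_iff_map_eq_zero _).mpr fun Y hY =>
      not_not.mp fun hY0 => h Y hY0 (sub_eq_zero.mp hY)
  obtain ⟨W, hW⟩ := LinearMap.injective_iff_surjective.mp hinj Xᴴ
  apply hX
  rw [← trace_mul_conjTranspose_self_eq_zero_iff, ← hW]
  simp [Matrix.mul_sub, trace_sub, ← hfg, hfX]

theorem eq_dotProduct_smul_of_sum_vecMulVec_eq {u : ι → m → ℂ} {ψ : m → ℂ}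
    (hψ : star ψ ⬝ᵥ ψ = 1) (h : ∑ α, vecMulVec (u α) (star (u α)) = vecMulVec ψ (star ψ))
    (α : ι) : u α = (star ψ ⬝ᵥ u α) • ψ := by
  set x := u α - (star ψ ⬝ᵥ u α) • ψ
  have hψx : star ψ ⬝ᵥ x = 0 := by simp [x, dotProduct_sub, hψ]
  have hquad (v : m → ℂ) :
      star x ⬝ᵥ (vecMulVec v (star v) *ᵥ x) = star (star v ⬝ᵥ x) * (star v ⬝ᵥ x) := by
    simp [vecMulVec_mulVec, dotProduct_comm (star x) v, star_dotProduct, mul_comm]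
  have hsum := congrArg (fun M => star x ⬝ᵥ (M *ᵥ x)) h
  simp only [sum_mulVec, dotProduct_sum, hquad, hψx, mul_zero] at hsum
  have hux : star (u α) ⬝ᵥ x = 0 := (CStarRing.star_mul_self_eq_zero_iff _).mp <|
    (Finset.sum_eq_zero_iff_of_nonneg fun β _ => star_mul_self_nonneg _).mp hsum α
      (Finset.mem_univ α)
  have hxx (y : m → ℂ) :
      star x ⬝ᵥ y = star (u α) ⬝ᵥ y - star (star ψ ⬝ᵥ u α) * (star ψ ⬝ᵥ y) := by
    simp [x, star_sub, sub_dotProduct]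
  exact sub_eq_zero.mp <| dotProduct_star_self_eq_zero.mp <| by
    rw [hxx x, hux, hψx, mul_zero, sub_zero]

theorem dotProduct_krausMap_mulVec_of_fixed (K : ι → Matrix m m ℂ) {ψ : m → ℂ}
    (hfix : krausMap K (vecMulVec ψ (star ψ)) = vecMulVec ψ (star ψ)) (A : Matrix m m ℂ) :
    star ψ ⬝ᵥ (krausMap (fun α => (K α)ᴴ) A *ᵥ ψ) = star ψ ⬝ᵥ (A *ᵥ ψ) := by
  have htr (B : Matrix m m ℂ) : star ψ ⬝ᵥ (B *ᵥ ψ) = (vecMulVec ψ (star ψ) * B).trace := by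
    rw [vecMulVec_mul, trace_vecMulVec, dotProduct_mulVec, dotProduct_comm]
  rw [htr, htr, ← trace_krausMap_mul, hfix]

theorem mulVec_eq_zero_of_dotProduct_sum_mulVec_eq_zero (N : ι → Matrix m m ℂ) {x : m → ℂ}
    (h : star x ⬝ᵥ ((∑ α, (N α)ᴴ * N α) *ᵥ x) = 0) (α : ι) : N α *ᵥ x = 0 := by
  simp only [sum_mulVec, dotProduct_sum, ← mulVec_mulVec, dotProduct_mulVec _ (N _)ᴴ,
    ← star_mulVec] at h
  exact dotProduct_star_self_eq_zero.mp <|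
    (Finset.sum_eq_zero_iff_of_nonneg fun β _ => dotProduct_star_self_nonneg _).mp h α
      (Finset.mem_univ α)

theorem mulVec_mulVec_eq_zero_of_sub_krausMap (K : ι → Matrix m m ℂ) {S : Matrix m m ℂ}
    (hS : S.PosSemidef) (hsub : (S - krausMap (fun α => (K α)ᴴ) S).PosSemidef) {x : m → ℂ}
    (hx : S *ᵥ x = 0) (α : ι) : S *ᵥ (K α *ᵥ x) = 0 := by
  have hquad : star x ⬝ᵥ (krausMap (fun α => (K α)ᴴ) S *ᵥ x) =
      ∑ β, star (K β *ᵥ x) ⬝ᵥ (S *ᵥ (K β *ᵥ x)) := by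
    simp only [krausMap_apply, conjTranspose_conjTranspose, sum_mulVec, dotProduct_sum,
      ← mulVec_mulVec, dotProduct_mulVec _ (K _)ᴴ, star_mulVec]
  have hle : star x ⬝ᵥ (krausMap (fun α => (K α)ᴴ) S *ᵥ x) ≤ 0 := by
    simpa [sub_mulVec, hx] using hsub.dotProduct_mulVec_nonneg x
  have hnonneg (β : ι) : 0 ≤ star (K β *ᵥ x) ⬝ᵥ (S *ᵥ (K β *ᵥ x)) :=
    hS.dotProduct_mulVec_nonneg _
  rw [hquad] at hle
  have := (Finset.sum_eq_zero_iff_of_nonneg fun β _ => hnonneg β).mp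
    (le_antisymm hle (Finset.sum_nonneg fun β _ => hnonneg β)) α (Finset.mem_univ α)
  exact (hS.dotProduct_mulVec_zero_iff _).mp this

theorem eq_trace_smul_of_fixed {ρ₀ : Matrix m m ℂ}
    (huniq : ∀ ρ, ρ.PosSemidef → ρ.trace = 1 → Φ ρ = ρ → ρ = ρ₀) {W : Matrix m m ℂ}
    (hW : W.PosSemidef) (hfix : Φ W = W) : W = W.trace • ρ₀ := by
  by_cases h0 : W.trace = 0
  · simp [hW.trace_eq_zero_iff.mp h0]
  · have := huniq (W.trace⁻¹ • W) (hW.smul (inv_nonneg.mpr hW.trace_nonneg))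
      (by rw [trace_smul, smul_eq_mul, inv_mul_cancel₀ h0]) (by rw [map_smul, hfix])
    rw [← this, smul_smul, mul_inv_cancel₀ h0, one_smul]

variable [DecidableEq m]

theorem trace_eq_trace_mul_mul_add {R : Type*} [CommRing R] {Q : Matrix m m R}
    (hQ : IsIdempotentElem Q) (X : Matrix m m R) :
    X.trace = (Q * X * Q).trace + ((1 - Q) * X * (1 - Q)).trace := by
  rw [trace_mul_cycle, hQ.eq, trace_mul_cycle (1 - Q), hQ.one_sub.eq, ← trace_add, ← add_mul,
    add_sub_cancel, one_mul]

theorem PosSemidef.mul_eq_zero_of_trace_eq_zero {X R : Matrix m m ℂ} (hX : X.PosSemidef)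
    (h : (Rᴴ * X * R).trace = 0) : X * R = 0 := by
  obtain ⟨C, rfl⟩ := CStarAlgebra.nonneg_iff_eq_star_mul_self.mp hX.nonneg
  rw [star_eq_conjTranspose, ← Matrix.mul_assoc, ← conjTranspose_mul, Matrix.mul_assoc,
    trace_conjTranspose_mul_self_eq_zero_iff] at h
  rw [Matrix.mul_assoc, h, Matrix.mul_zero]

theorem IsHermitian.exists_posSemidef_sub {H : Matrix m m ℂ} (hH : H.IsHermitian) :
    ∃ A B Q : Matrix m m ℂ, A.PosSemidef ∧ B.PosSemidef ∧ H = A - B ∧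
      IsStarProjection Q ∧ Q * A = A ∧ Q * B = 0 := by
  have hc (f : ℝ → ℝ) : ContinuousOn f (spectrum ℝ H) := H.finite_real_spectrum.continuousOn f
  refine ⟨cfc (fun x : ℝ => max x 0) H, cfc (fun x : ℝ => max (-x) 0) H,
    cfc (fun x : ℝ => if 0 < x then 1 else 0) H,
    (cfc_nonneg fun x _ => le_max_right _ _).posSemidef,
    (cfc_nonneg fun x _ => le_max_right _ _).posSemidef, ?_, ⟨?_, cfc_predicate _ _⟩, ?_, ?_⟩
  · rw [← cfc_sub _ _ _ (hc _) (hc _)]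
    conv_lhs => rw [← cfc_id' ℝ H hH]
    exact cfc_congr fun x _ => (max_zero_sub_max_neg_zero_eq_self x).symm
  · rw [IsIdempotentElem, ← cfc_mul _ _ _ (hc _) (hc _)]
    exact cfc_congr fun x _ => by split_ifs <;> simp
  · rw [← cfc_mul _ _ _ (hc _) (hc _)]
    refine cfc_congr fun x _ => ?_
    split_ifs with h
    · simp
    · simp [max_eq_right (not_lt.mp h)]
  · rw [← cfc_mul _ _ _ (hc _) (hc _), ← cfc_zero ℝ H]
    refine cfc_congr fun x _ => ?_
    split_ifs with h
    · simp [h.le]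
    · simp

-- Minimality of the Jordan decomposition `A - B`, `Q` being the support projection of `A`.
theorem eq_of_sub_eq_sub_of_trace_le {Q A B A' B' : Matrix m m ℂ} (hQ : IsStarProjection Q)
    (hA : A.IsHermitian) (hQA : Q * A = A) (hQB : Q * B = 0) (hA' : A'.PosSemidef)
    (hB' : B'.PosSemidef) (hsub : A' - B' = A - B) (htr : A'.trace ≤ A.trace) : A' = A := by
  have hQh : Qᴴ = Q := hQ.isSelfAdjoint
  have hQc : (1 - Q)ᴴ = 1 - Q := hQ.one_sub.isSelfAdjoint
  have hAQ : A * Q = A := by simpa [hQh, hA.eq] using congrArg conjTranspose hQA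
  have hcomp : Q * A' * Q - Q * B' * Q = A := by
    rw [← Matrix.sub_mul, ← Matrix.mul_sub, hsub, Matrix.mul_sub, Matrix.sub_mul, hQA, hAQ, hQB,
      Matrix.zero_mul, sub_zero]
  have hr₁ : 0 ≤ ((1 - Q) * A' * (1 - Q)).trace := by
    have := (hA'.conjTranspose_mul_mul_same (1 - Q)).trace_nonneg
    rwa [hQc] at this
  have hr₂ : 0 ≤ (Q * B' * Q).trace := by
    have := (hB'.conjTranspose_mul_mul_same Q).trace_nonneg
    rwa [hQh] at this
  have hsum : ((1 - Q) * A' * (1 - Q)).trace + (Q * B' * Q).trace = A'.trace - A.trace := by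
    rw [trace_eq_trace_mul_mul_add hQ.isIdempotentElem A', ← hcomp, trace_sub]
    ring
  obtain ⟨h₁, h₂⟩ := (add_eq_zero_iff_of_nonneg hr₁ hr₂).mp
    (le_antisymm (hsum ▸ sub_nonpos.mpr htr) (add_nonneg hr₁ hr₂))
  have hA'Q : A' * (1 - Q) = 0 := hA'.mul_eq_zero_of_trace_eq_zero (by rwa [hQc])
  have hB'Q : B' * Q = 0 := hB'.mul_eq_zero_of_trace_eq_zero (by rwa [hQh])
  have hA'eq : A' * Q = A' := by rwa [Matrix.mul_sub, Matrix.mul_one, sub_eq_zero, eq_comm] at hA'Q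
  have hQA' : Q * A' = A' := by simpa [hQh, hA'.1.eq] using congrArg conjTranspose hA'eq
  rw [← hcomp, Matrix.mul_assoc Q B', hB'Q, Matrix.mul_zero, sub_zero, hQA', hA'eq]

theorem IsHermitian.exists_isStarProjection_top_eigenspace [Nonempty m] {T : Matrix m m ℂ}
    (hT : T.IsHermitian) :
    ∃ (c : ℝ) (P : Matrix m m ℂ), IsStarProjection P ∧ P ≠ 0 ∧ (c • 1 - T).PosSemidef ∧
      T * P = c • P ∧ ∀ x, T *ᵥ x = c • x → P *ᵥ x = x := by
  have hc (f : ℝ → ℝ) : ContinuousOn f (spectrum ℝ T) := T.finite_real_spectrum.continuousOn f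
  obtain ⟨c, hcT, hmax⟩ := Set.exists_max_image _ id T.finite_real_spectrum
    (ContinuousFunctionalCalculus.spectrum_nonempty T hT)
  have hS : c • 1 - T = cfc (fun x : ℝ => c - x) T := by
    rw [cfc_sub _ _ _ (hc _) (hc _), cfc_const c T, cfc_id' ℝ T, Algebra.algebraMap_eq_smul_one]
  refine ⟨c, cfc (fun x : ℝ => if x = c then 1 else 0) T, ⟨?_, cfc_predicate _ _⟩, ?_, ?_, ?_, ?_⟩
  · rw [IsIdempotentElem, ← cfc_mul _ _ _ (hc _) (hc _)]
    exact cfc_congr fun x _ => by split_ifs <;> simp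
  · intro h
    have := eqOn_of_cfc_eq_cfc (h.trans (cfc_zero ℝ T).symm) (hc _) (hc _) hT hcT
    simp at this
  · rw [hS]
    exact (cfc_nonneg fun x hx => sub_nonneg.mpr (hmax x hx)).posSemidef
  · nth_rw 1 [← cfc_id' ℝ T hT.isSelfAdjoint]
    rw [← cfc_mul _ _ _ (hc _) (hc _), ← cfc_const_mul _ _ _ (hc _)]
    exact cfc_congr fun x _ => by split_ifs with h <;> simp [h]
  · intro x hx
    have h1P : 1 - cfc (fun x : ℝ => if x = c then 1 else 0) T =
        cfc (fun x : ℝ => (c - x)⁻¹) T * (c • 1 - T) := by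
      rw [hS, ← cfc_mul _ _ _ (hc _) (hc _), ← cfc_one ℝ T, ← cfc_sub _ _ _ (hc _) (hc _)]
      refine cfc_congr fun x _ => ?_
      by_cases h : x = c
      · simp [h]
      · simp [h, inv_mul_cancel₀ (sub_ne_zero.mpr (Ne.symm h))]
    have := congrArg (· *ᵥ x) h1P
    simp only [sub_mulVec, one_mulVec, ← mulVec_mulVec, smul_mulVec, hx, sub_self,
      mulVec_zero] at this
    exact (sub_eq_zero.mp this).symm

theorem map_star_of_map_posSemidef (hpos : ∀ A, A.PosSemidef → (Φ A).PosSemidef)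
    (X : Matrix m m ℂ) : Φ (star X) = star (Φ X) := by
  have hsa (H : selfAdjoint (Matrix m m ℂ)) : star (Φ H) = Φ H := by
    obtain ⟨A, B, -, hA, hB, hH, -⟩ := IsHermitian.exists_posSemidef_sub H.2
    rw [hH, map_sub]
    exact ((hpos A hA).1.sub (hpos B hB).1).eq
  conv => enter [1, 2]; rw [← realPart_add_I_smul_imaginaryPart X]
  conv => enter [2, 1, 2]; rw [← realPart_add_I_smul_imaginaryPart X]
  simp only [star_add, star_smul, map_add, map_smul, (ℜ X).2.star_eq, (ℑ X).2.star_eq, hsa,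
    Complex.star_def, Complex.conj_I, neg_smul, map_neg]

theorem exists_fixed_posSemidef_sub (hpos : ∀ A, A.PosSemidef → (Φ A).PosSemidef)
    (htr : ∀ A, (Φ A).trace = A.trace) {H : Matrix m m ℂ} (hH : H.IsHermitian) (hfix : Φ H = H) :
    ∃ A B, A.PosSemidef ∧ B.PosSemidef ∧ Φ A = A ∧ Φ B = B ∧ H = A - B := by
  obtain ⟨A, B, Q, hA, hB, rfl, hQ, hQA, hQB⟩ := hH.exists_posSemidef_sub
  have hΦA : Φ A = A := eq_of_sub_eq_sub_of_trace_le hQ hA.1 hQA hQB (hpos A hA) (hpos B hB)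
    (by rw [← map_sub, hfix]) (htr A).le
  refine ⟨A, B, hA, hB, hΦA, ?_, rfl⟩
  rwa [map_sub, hΦA, sub_right_inj] at hfix

theorem mem_span_fixed_posSemidef (hpos : ∀ A, A.PosSemidef → (Φ A).PosSemidef)
    (htr : ∀ A, (Φ A).trace = A.trace) {X : Matrix m m ℂ} (hfix : Φ X = X) :
    X ∈ Submodule.span ℂ {W | W.PosSemidef ∧ Φ W = W} := by
  have hherm {H : Matrix m m ℂ} (hH : IsSelfAdjoint H) (hHfix : Φ H = H) :
      H ∈ Submodule.span ℂ {W | W.PosSemidef ∧ Φ W = W} := by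
    obtain ⟨A, B, hA, hB, hΦA, hΦB, rfl⟩ := exists_fixed_posSemidef_sub hpos htr hH hHfix
    exact sub_mem (Submodule.subset_span ⟨hA, hΦA⟩) (Submodule.subset_span ⟨hB, hΦB⟩)
  have hstar : Φ (star X) = star X := by rw [map_star_of_map_posSemidef hpos, hfix]
  rw [← realPart_add_I_smul_imaginaryPart X]
  refine add_mem (hherm (ℜ X).2 ?_) (Submodule.smul_mem _ _ (hherm (ℑ X).2 ?_))
  · rw [realPart_apply_coe, LinearMap.map_smul_of_tower, map_add, hfix, hstar]
  · rw [imaginaryPart_apply_coe, map_smul, LinearMap.map_smul_of_tower, map_sub, hfix, hstar]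

theorem exists_fixed_posSemidef_ne_zero [Nonempty m]
    (hpos : ∀ A, A.PosSemidef → (Φ A).PosSemidef) (htr : ∀ A, (Φ A).trace = A.trace) :
    ∃ W, W.PosSemidef ∧ W ≠ 0 ∧ Φ W = W := by
  -- `Φ - id` takes values in trace-zero matrices, so it misses `1`.
  have hninj : ¬ Function.Injective (Φ - LinearMap.id : Module.End ℂ (Matrix m m ℂ)) := by
    intro hinj
    obtain ⟨Z, hZ⟩ := LinearMap.injective_iff_surjective.mp hinj (1 : Matrix m m ℂ)
    have := congrArg trace hZ
    simp [htr, eq_comm] at this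
  obtain ⟨X, hX, hX0⟩ :
      ∃ X, (Φ - LinearMap.id : Module.End ℂ (Matrix m m ℂ)) X = 0 ∧ X ≠ 0 := by
    simpa [injective_iff_map_eq_zero] using hninj
  have hfix : Φ X = X := sub_eq_zero.mp hX
  by_contra! h
  have hspan : Submodule.span ℂ {W | W.PosSemidef ∧ Φ W = W} = ⊥ :=
    Submodule.span_eq_bot.mpr fun W hW => not_not.mp fun hW0 => h W hW.1 hW0 hW.2
  simpa [hspan, hX0] using mem_span_fixed_posSemidef hpos htr hfix

theorem exists_eq_smul_of_fixed (hpos : ∀ A, A.PosSemidef → (Φ A).PosSemidef)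
    (htr : ∀ A, (Φ A).trace = A.trace) {ρ₀ : Matrix m m ℂ}
    (huniq : ∀ ρ, ρ.PosSemidef → ρ.trace = 1 → Φ ρ = ρ → ρ = ρ₀) {X : Matrix m m ℂ}
    (hfix : Φ X = X) : ∃ c : ℂ, X = c • ρ₀ := by
  have hle : Submodule.span ℂ {W | W.PosSemidef ∧ Φ W = W} ≤ ℂ ∙ ρ₀ :=
    Submodule.span_le.mpr fun W hW => Submodule.mem_span_singleton.mpr
      ⟨W.trace, (eq_trace_smul_of_fixed huniq hW.1 hW.2).symm⟩
  obtain ⟨c, hc⟩ := Submodule.mem_span_singleton.mp (hle (mem_span_fixed_posSemidef hpos htr hfix))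
  exact ⟨c, hc.symm⟩

theorem exists_fixed_posSemidef_of_compression (hpos : ∀ A, A.PosSemidef → (Φ A).PosSemidef)
    (htr : ∀ A, (Φ A).trace = A.trace) {P : Matrix m m ℂ} (hP : IsStarProjection P) (hP0 : P ≠ 0)
    (hinv : ∀ W, P * Φ (P * W * P) * P = Φ (P * W * P)) :
    ∃ W, W.PosSemidef ∧ W ≠ 0 ∧ Φ W = W ∧ P * W * P = W := by
  have : Nonempty m := not_isEmpty_iff.mp fun _ => hP0 (Subsingleton.elim _ _)
  have hPh : Pᴴ = P := hP.isSelfAdjoint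
  have hPP : P * P = P := hP.isIdempotentElem.eq
  have hPpsd : P.PosSemidef := by simpa [hPh, hPP] using posSemidef_conjTranspose_mul_self P
  have htrP : P.trace ≠ 0 := fun h => hP0 (hPpsd.trace_eq_zero_iff.mp h)
  set σ := P.trace⁻¹ • P
  have hσ : σ.PosSemidef := hPpsd.smul (inv_nonneg.mpr hPpsd.trace_nonneg)
  have htrσ : σ.trace = 1 := by rw [trace_smul, smul_eq_mul, inv_mul_cancel₀ htrP]
  -- `Ψ` runs `Φ` on the corner `P` and returns the trace lost outside it as `σ`: it is positive,
  -- trace-preserving and lands in the corner.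
  set Ψ : Matrix m m ℂ →ₗ[ℂ] Matrix m m ℂ :=
    Φ ∘ₗ LinearMap.mulRight ℂ P ∘ₗ LinearMap.mulLeft ℂ P +
      (traceLinearMap m ℂ ℂ ∘ₗ LinearMap.mulLeft ℂ (1 - P)).smulRight σ
  have hΨ (W) : Ψ W = Φ (P * W * P) + ((1 - P) * W).trace • σ := rfl
  have hcorner (W) : ((1 - P) * W).trace = ((1 - P)ᴴ * W * (1 - P)).trace := by
    rw [show (1 - P)ᴴ = 1 - P from hP.one_sub.isSelfAdjoint, trace_mul_cycle,
      hP.one_sub.isIdempotentElem.eq]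
  have hΨpos (A) (hA : A.PosSemidef) : (Ψ A).PosSemidef := by
    rw [hΨ, hcorner]
    refine (hpos _ ?_).add (hσ.smul (hA.conjTranspose_mul_mul_same _).trace_nonneg)
    simpa [hPh] using hA.conjTranspose_mul_mul_same P
  have hΨtr (A) : (Ψ A).trace = A.trace := by
    rw [hΨ, trace_add, htr, trace_smul, htrσ, smul_eq_mul, mul_one, trace_mul_cycle, hPP,
      ← trace_add, ← add_mul, add_sub_cancel, one_mul]
  obtain ⟨W, hW, hW0, hΨW⟩ := exists_fixed_posSemidef_ne_zero hΨpos hΨtr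
  have hPσP : P * σ * P = σ := by simp only [σ, Matrix.mul_smul, Matrix.smul_mul, hPP]
  have hPWP : P * W * P = W := by
    rw [← hΨW, hΨ, Matrix.mul_add, Matrix.add_mul, hinv, Matrix.mul_smul, Matrix.smul_mul, hPσP]
  refine ⟨W, hW, hW0, ?_, hPWP⟩
  have hout : ((1 - P) * W).trace = 0 := by
    rw [← hPWP, ← Matrix.mul_assoc, ← Matrix.mul_assoc, Matrix.sub_mul, hPP, Matrix.one_mul,
      sub_self, Matrix.zero_mul, Matrix.zero_mul, trace_zero]
  rwa [hΨ, hout, zero_smul, add_zero, hPWP] at hΨW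

theorem krausMap_conjTranspose_one {K : ι → Matrix m m ℂ} (hK : ∑ α, (K α)ᴴ * K α = 1) :
    krausMap (fun α => (K α)ᴴ) 1 = 1 := by
  simpa using hK

theorem trace_krausMap {K : ι → Matrix m m ℂ} (hK : ∑ α, (K α)ᴴ * K α = 1) (X : Matrix m m ℂ) :
    (krausMap K X).trace = X.trace := by
  rw [← Matrix.mul_one (krausMap K X), trace_krausMap_mul, krausMap_conjTranspose_one hK,
    Matrix.mul_one]

theorem sum_conjTranspose_mul_self_eq_krausMap_sub {K : ι → Matrix m m ℂ}
    (hK : ∑ α, (K α)ᴴ * K α = 1) {Y : Matrix m m ℂ} {μ : ℂ} (hμ : star μ * μ = 1)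
    (hY : krausMap (fun α => (K α)ᴴ) Y = μ • Y) :
    ∑ α, (Y * K α - μ • (K α * Y))ᴴ * (Y * K α - μ • (K α * Y)) =
      krausMap (fun α => (K α)ᴴ) (Yᴴ * Y) - Yᴴ * Y := by
  have hYh : krausMap (fun α => (K α)ᴴ) Yᴴ = star μ • Yᴴ := by
    rw [← star_eq_conjTranspose, map_star_of_map_posSemidef (fun A => posSemidef_krausMap _), hY,
      star_smul, star_eq_conjTranspose]
  have hterm (α : ι) : (Y * K α - μ • (K α * Y))ᴴ * (Y * K α - μ • (K α * Y)) =
      (K α)ᴴ * (Yᴴ * Y) * K α - μ • ((K α)ᴴ * Yᴴ * K α * Y) -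
        star μ • (Yᴴ * ((K α)ᴴ * Y * K α)) + (star μ * μ) • (Yᴴ * ((K α)ᴴ * K α) * Y) := by
    simp only [conjTranspose_sub, conjTranspose_smul, conjTranspose_mul, Matrix.sub_mul,
      Matrix.mul_sub, Matrix.smul_mul, Matrix.mul_smul, Matrix.mul_assoc]
    module
  simp only [krausMap_apply, conjTranspose_conjTranspose] at hY hYh ⊢
  simp only [hterm, Finset.sum_add_distrib, Finset.sum_sub_distrib, ← Finset.smul_sum,
    ← Finset.sum_mul, ← Finset.mul_sum, hY, hYh, hK, hμ, Matrix.smul_mul, Matrix.mul_smul,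
    smul_smul, Matrix.mul_one, one_smul, mul_comm μ]
  abel

theorem posSemidef_krausMap_conjTranspose_mul_self_sub {K : ι → Matrix m m ℂ}
    (hK : ∑ α, (K α)ᴴ * K α = 1) {Y : Matrix m m ℂ} {μ : ℂ} (hμ : star μ * μ = 1)
    (hY : krausMap (fun α => (K α)ᴴ) Y = μ • Y) :
    (krausMap (fun α => (K α)ᴴ) (Yᴴ * Y) - Yᴴ * Y).PosSemidef := by
  rw [← sum_conjTranspose_mul_self_eq_krausMap_sub hK hμ hY]
  exact posSemidef_sum _ fun α _ => posSemidef_conjTranspose_mul_self _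

theorem mulVec_mulVec_eq_smul_of_dual_eigenvector {K : ι → Matrix m m ℂ}
    (hK : ∑ α, (K α)ᴴ * K α = 1) {ψ : m → ℂ}
    (hfix : krausMap K (vecMulVec ψ (star ψ)) = vecMulVec ψ (star ψ)) {Y : Matrix m m ℂ} {μ : ℂ}
    (hμ : star μ * μ = 1) (hY : krausMap (fun α => (K α)ᴴ) Y = μ • Y) (α : ι) :
    Y *ᵥ (K α *ᵥ ψ) = μ • (K α *ᵥ (Y *ᵥ ψ)) := by
  have := mulVec_eq_zero_of_dotProduct_sum_mulVec_eq_zero _ (by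
    rw [sum_conjTranspose_mul_self_eq_krausMap_sub hK hμ hY, sub_mulVec, dotProduct_sub,
      dotProduct_krausMap_mulVec_of_fixed K hfix, sub_self]) α
  rwa [sub_mulVec, smul_mulVec, ← mulVec_mulVec, ← mulVec_mulVec, sub_eq_zero] at this

-- The top eigenspace of `T` is invariant under every `K α`, because `ℰ† (c - T) ≤ c - T`.
theorem exists_fixed_posSemidef_mul_eq_smul [Nonempty m] {K : ι → Matrix m m ℂ}
    (hK : ∑ α, (K α)ᴴ * K α = 1) {T : Matrix m m ℂ} (hT : T.IsHermitian)
    (hsub : (krausMap (fun α => (K α)ᴴ) T - T).PosSemidef) :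
    ∃ (c : ℝ) (W : Matrix m m ℂ), W.PosSemidef ∧ W ≠ 0 ∧ krausMap K W = W ∧
      (c • 1 - T).PosSemidef ∧ T * W = c • W := by
  obtain ⟨c, P, hP, hP0, hS, hTP, hker⟩ := hT.exists_isStarProjection_top_eigenspace
  have hSsub : (c • 1 - T - krausMap (fun α => (K α)ᴴ) (c • 1 - T)).PosSemidef := by
    rwa [map_sub, LinearMap.map_smul_of_tower, krausMap_conjTranspose_one hK,
      sub_sub_sub_cancel_left]
  have hPx (x : m → ℂ) : (c • 1 - T) *ᵥ (P *ᵥ x) = 0 := by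
    rw [mulVec_mulVec, Matrix.sub_mul, hTP, Matrix.smul_mul, Matrix.one_mul, sub_self, zero_mulVec]
  have hKP (α : ι) : P * K α * P = K α * P := by
    refine ext_iff_mulVec.mpr fun x => ?_
    rw [← mulVec_mulVec, ← mulVec_mulVec, ← mulVec_mulVec]
    refine hker _ ?_
    have := mulVec_mulVec_eq_zero_of_sub_krausMap K hS hSsub (hPx x) α
    rwa [sub_mulVec, smul_mulVec, one_mulVec, sub_eq_zero, eq_comm] at this
  have hPh : Pᴴ = P := hP.isSelfAdjoint
  have hKPh (α : ι) : P * (K α)ᴴ * P = P * (K α)ᴴ := by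
    simpa [hPh, Matrix.mul_assoc] using congrArg conjTranspose (hKP α)
  have hinv (W : Matrix m m ℂ) : P * krausMap K (P * W * P) * P = krausMap K (P * W * P) := by
    simp only [krausMap_apply, Finset.mul_sum, Finset.sum_mul]
    refine Finset.sum_congr rfl fun α _ => ?_
    calc P * (K α * (P * W * P) * (K α)ᴴ) * P = P * K α * P * W * (P * (K α)ᴴ * P) := by
          simp only [Matrix.mul_assoc]
      _ = K α * (P * W * P) * (K α)ᴴ := by
          rw [hKP, hKPh]; simp only [Matrix.mul_assoc]
  obtain ⟨W, hW, hW0, hfix, hPWP⟩ := exists_fixed_posSemidef_of_compression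
    (fun _ => posSemidef_krausMap K) (trace_krausMap hK) hP hP0 hinv
  refine ⟨c, W, hW, hW0, hfix, hS, ?_⟩
  rw [← hPWP, ← Matrix.mul_assoc, ← Matrix.mul_assoc, hTP, Matrix.smul_mul, Matrix.smul_mul]

theorem exists_eq_smul_of_mulVec_eq_smul {K : ι → Matrix m m ℂ} (hK : ∑ α, (K α)ᴴ * K α = 1)
    {ψ : m → ℂ} (hψ : star ψ ⬝ᵥ ψ = 1)
    (huniq : ∀ ρ, ρ.PosSemidef → ρ.trace = 1 → krausMap K ρ = ρ → ρ = vecMulVec ψ (star ψ))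
    {φ : m → ℂ} (hφ : φ ≠ 0) {d : ι → ℂ} (hd : ∀ α, K α *ᵥ φ = d α • φ) :
    ∃ s : ℂ, ψ = s • φ := by
  set W := vecMulVec φ (star φ)
  have htrW : W.trace ≠ 0 := by
    rw [trace_vecMulVec, dotProduct_comm]
    exact fun h => hφ (dotProduct_star_self_eq_zero.mp h)
  have hKW : krausMap K W = (∑ α, star (d α) * d α) • W := by
    simp only [W, krausMap_vecMulVec, hd, star_smul, smul_vecMulVec, vecMulVec_smul, smul_smul,
      Finset.sum_smul]
  have hsum : ∑ α, star (d α) * d α = 1 := by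
    have := trace_krausMap hK W
    rwa [hKW, trace_smul, smul_eq_mul, mul_eq_right₀ htrW] at this
  have hWψ := eq_trace_smul_of_fixed huniq (posSemidef_vecMulVec_self_star φ)
    (by rw [hKW, hsum, one_smul])
  have := congrArg (· *ᵥ ψ) hWψ
  simp only [vecMulVec_mulVec, smul_mulVec, hψ, op_smul_eq_smul, one_smul] at this
  exact ⟨W.trace⁻¹ * (star φ ⬝ᵥ ψ), by rw [mul_smul, this, inv_smul_smul₀ htrW]⟩

theorem eq_zero_of_subharmonic_of_mulVec_eq_zero {K : ι → Matrix m m ℂ} (hK : ∑ α, (K α)ᴴ * K α = 1)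
    {ψ : m → ℂ} (hψ : star ψ ⬝ᵥ ψ = 1)
    (huniq : ∀ ρ, ρ.PosSemidef → ρ.trace = 1 → krausMap K ρ = ρ → ρ = vecMulVec ψ (star ψ))
    {T : Matrix m m ℂ} (hT : T.PosSemidef)
    (hsub : (krausMap (fun α => (K α)ᴴ) T - T).PosSemidef) (hTψ : T *ᵥ ψ = 0) : T = 0 := by
  have : Nonempty m := not_isEmpty_iff.mp fun _ => by simp at hψ
  obtain ⟨c, W, hW, hW0, hfix, hS, hTW⟩ := exists_fixed_posSemidef_mul_eq_smul hK hT.1 hsub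
  have htrW : W.trace ≠ 0 := fun h => hW0 (hW.trace_eq_zero_iff.mp h)
  have hψ0 : ψ ≠ 0 := by rintro rfl; simp at hψ
  have hWψ : W *ᵥ ψ = W.trace • ψ := by
    conv_lhs => rw [eq_trace_smul_of_fixed huniq hW hfix]
    rw [smul_mulVec, vecMulVec_mulVec, hψ, MulOpposite.op_one, one_smul]
  have hc : c = 0 := by
    have key := congrArg (· *ᵥ ψ) hTW
    simp only [← mulVec_mulVec, smul_mulVec, hWψ, mulVec_smul, hTψ, smul_zero] at key
    exact (smul_eq_zero.mp key.symm).resolve_right (smul_ne_zero htrW hψ0)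
  rw [hc, zero_smul, zero_sub] at hS
  exact le_antisymm (le_iff.mpr (by rwa [zero_sub])) hT.nonneg

theorem eq_one_of_krausMap_eq_smul {K : ι → Matrix m m ℂ} (hK : ∑ α, (K α)ᴴ * K α = 1)
    {ψ : m → ℂ} (hψ : star ψ ⬝ᵥ ψ = 1)
    (hfix : krausMap K (vecMulVec ψ (star ψ)) = vecMulVec ψ (star ψ))
    (huniq : ∀ ρ, ρ.PosSemidef → ρ.trace = 1 → krausMap K ρ = ρ → ρ = vecMulVec ψ (star ψ))
    {lam : ℂ} {X : Matrix m m ℂ} (hX : X ≠ 0) (hEX : krausMap K X = lam • X) (hlam : ‖lam‖ = 1) :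
    lam = 1 := by
  have hlam' : star lam * lam = 1 := by
    rw [RCLike.star_def, Complex.conj_mul', hlam]; norm_num
  obtain ⟨Y, hY0, hY⟩ := exists_eigenvector_of_trace_mul_eq (trace_krausMap_mul K) hX hEX
  have hYK := mulVec_mulVec_eq_smul_of_dual_eigenvector hK hfix hlam' hY
  set c := fun α => star ψ ⬝ᵥ (K α *ᵥ ψ)
  have hKψ : ∀ α, K α *ᵥ ψ = c α • ψ :=
    eq_dotProduct_smul_of_sum_vecMulVec_eq hψ (by rw [← krausMap_vecMulVec, hfix])
  by_cases hv : Y *ᵥ ψ = 0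
  · refine absurd (conjTranspose_mul_self_eq_zero.mp ?_) hY0
    exact eq_zero_of_subharmonic_of_mulVec_eq_zero hK hψ huniq (posSemidef_conjTranspose_mul_self Y)
      (posSemidef_krausMap_conjTranspose_mul_self_sub hK hlam' hY)
      (by rw [← mulVec_mulVec, hv, mulVec_zero])
  · obtain ⟨s, hs⟩ := exists_eq_smul_of_mulVec_eq_smul hK hψ huniq hv
      (d := fun α => star lam * c α) fun α => by
        rw [mul_smul, ← mulVec_smul, ← hKψ, hYK, smul_smul, hlam', one_smul]
    have hlamK (α : ι) : lam • (K α *ᵥ ψ) = K α *ᵥ ψ := by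
      calc lam • (K α *ᵥ ψ) = s • lam • (K α *ᵥ (Y *ᵥ ψ)) := by
            nth_rw 1 [hs]; rw [mulVec_smul, smul_comm]
        _ = K α *ᵥ ψ := by rw [← hYK, hKψ, mulVec_smul, smul_comm, ← hs]
    by_contra hne
    have hKψ0 (α : ι) : K α *ᵥ ψ = 0 :=
      (smul_eq_zero.mp (by rw [sub_smul, one_smul, hlamK, sub_self])).resolve_left
        (sub_ne_zero.mpr hne)
    rw [krausMap_vecMulVec] at hfix
    simp [hKψ0, eq_comm (a := (0 : Matrix m m ℂ))] at hfix
    simp [hfix] at hψ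

end Matrix

/-- If a CPTP map `ℰ(X) = Σ K_α X K_αᴴ` has the pure state `|ψ⟩⟨ψ|` as its unique fixed
point among states, then the only eigenvalue of `ℰ` on the unit circle is `1`, with
eigenvector `|ψ⟩⟨ψ|`. -/
theorem stmt9 {n k : ℕ}
    (K : Fin k → Matrix (Fin n) (Fin n) ℂ)
    (hK : ∑ α, (K α)ᴴ * K α = 1)
    (ψ : Fin n → ℂ) (hψ : star ψ ⬝ᵥ ψ = 1)
    (hfix : (∑ α, K α * Matrix.vecMulVec ψ (star ψ) * (K α)ᴴ) = Matrix.vecMulVec ψ (star ψ))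
    (huniq : ∀ ρ : Matrix (Fin n) (Fin n) ℂ, ρ.PosSemidef → ρ.trace = 1 →
        (∑ α, K α * ρ * (K α)ᴴ) = ρ → ρ = Matrix.vecMulVec ψ (star ψ)) :
    ∀ (lam : ℂ) (X : Matrix (Fin n) (Fin n) ℂ), X ≠ 0 →
      (∑ α, K α * X * (K α)ᴴ) = lam • X → ‖lam‖ = 1 →
      lam = 1 ∧ ∃ c : ℂ, X = c • Matrix.vecMulVec ψ (star ψ) := by
  have hfix' : krausMap K (vecMulVec ψ (star ψ)) = vecMulVec ψ (star ψ) := by simpa using hfix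
  have huniq' : ∀ ρ, ρ.PosSemidef → ρ.trace = 1 → krausMap K ρ = ρ → ρ = vecMulVec ψ (star ψ) := by
    simpa using huniq
  intro lam X hX hEX hlam
  have hEX' : krausMap K X = lam • X := by simpa using hEX
  obtain rfl := eq_one_of_krausMap_eq_smul hK hψ hfix' huniq' hX hEX' hlam
  exact ⟨rfl, exists_eq_smul_of_fixed (fun _ => posSemidef_krausMap K) (trace_krausMap hK) huniq'
    (by rwa [one_smul] at hEX')⟩
end

section
/- Let {c_α} ⊂ ℂ with Σ|c_α|² = 1, and {A_α} operators with Σ_α A_α†A_α ⪯ I. If a vector x satisfies Σ_α c̄_α A_α x = λ*x for some λ ∈ ℂ with |λ| = 1, then A_α x = c_α λ* x for every α, and Σ_α ⟨x, A_α†A_α x⟩ = ‖x‖². -/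
open Matrix
open scoped ComplexOrder

private lemma dotProduct_sum' {m k : ℕ} (v : Fin m → ℂ) (f : Fin k → Fin m → ℂ) :
    v ⬝ᵥ (∑ α, f α) = ∑ α, v ⬝ᵥ f α := by
  simp only [dotProduct, Finset.sum_apply, Finset.mul_sum]
  exact Finset.sum_comm

private lemma sum_mulVec' {m k : ℕ} (M : Fin k → Matrix (Fin m) (Fin m) ℂ) (x : Fin m → ℂ) :
    (∑ α, M α) *ᵥ x = ∑ α, (M α) *ᵥ x := by
  ext i
  simp only [Matrix.mulVec, dotProduct, Finset.sum_apply, Matrix.sum_apply, Finset.sum_mul]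
  exact Finset.sum_comm

private lemma conj_mul_self' (z : ℂ) : (starRingEnd ℂ z) * z = ((‖z‖^2 : ℝ) : ℂ) := by
  rw [← Complex.normSq_eq_conj_mul_self, Complex.normSq_eq_norm_sq]

/-- Equality case of Cauchy–Schwarz: if `Σ|c_α|² = 1`, `Σ A_αᴴA_α ⪯ I`, `|λ| = 1`, and
`Σ c̄_α A_α x = λ* x`, then `A_α x = c_α λ* x` for every `α` and
`Σ ⟨x, A_αᴴA_α x⟩ = ‖x‖²`. -/
theorem stmt12 {m k : ℕ}
    (c : Fin k → ℂ) (hc : ∑ α, ‖c α‖^2 = 1)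
    (A : Fin k → Matrix (Fin m) (Fin m) ℂ)
    (hsub : ((1 : Matrix (Fin m) (Fin m) ℂ) - ∑ α, (A α)ᴴ * A α).PosSemidef)
    (x : Fin m → ℂ) (lam : ℂ) (hlam : ‖lam‖ = 1)
    (hx : ∑ α, (starRingEnd ℂ (c α)) • (A α).mulVec x = (starRingEnd ℂ lam) • x) :
    (∀ α, (A α).mulVec x = (c α * starRingEnd ℂ lam) • x)
    ∧ ∑ α, star x ⬝ᵥ ((A α)ᴴ * A α).mulVec x = star x ⬝ᵥ x := by
  set y : Fin k → Fin m → ℂ := fun α => (A α).mulVec x with hy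
  set q : ℂ := star x ⬝ᵥ x with hq
  have hconv : ∀ α, star x ⬝ᵥ ((A α)ᴴ * A α).mulVec x = star (y α) ⬝ᵥ y α := by
    intro α
    rw [← Matrix.mulVec_mulVec, Matrix.dotProduct_mulVec, hy]
    rw [Matrix.star_mulVec]
  have hlam1 : (starRingEnd ℂ lam) * lam = 1 := by
    rw [conj_mul_self', hlam]; norm_num
  have hc1 : ∑ α, (starRingEnd ℂ (c α)) * c α = 1 := by
    simp only [conj_mul_self']
    rw [← Complex.ofReal_sum, hc, Complex.ofReal_one]
  have hd : ∑ α, (starRingEnd ℂ (c α)) * (star x ⬝ᵥ y α) = starRingEnd ℂ lam * q := by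
    have h := congrArg (fun v => star x ⬝ᵥ v) hx
    simp only [dotProduct_sum', dotProduct_smul, smul_eq_mul] at h
    exact h
  -- PSD inequality
  have hineq : ∑ α, star (y α) ⬝ᵥ y α ≤ q := by
    have h0 := hsub.dotProduct_mulVec_nonneg x
    rw [Matrix.sub_mulVec, Matrix.one_mulVec, dotProduct_sub, sum_mulVec',
      dotProduct_sum'] at h0
    simp only [hconv] at h0
    rw [← hq, sub_nonneg] at h0
    exact h0
  -- z α := y α - (c α * conj lam) • x ; key identity
  set z : Fin k → Fin m → ℂ := fun α => y α - (c α * starRingEnd ℂ lam) • x with hz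
  have hterm : ∀ α, star (z α) ⬝ᵥ z α
      = star (y α) ⬝ᵥ y α
        - (starRingEnd ℂ (c α) * lam) * (star x ⬝ᵥ y α)
        - (c α * starRingEnd ℂ lam) * (star (y α) ⬝ᵥ x)
        + (starRingEnd ℂ (c α) * c α) * (starRingEnd ℂ lam * lam) * q := by
    intro α
    simp only [hz, star_sub, star_smul, sub_dotProduct, dotProduct_sub, smul_dotProduct,
      dotProduct_smul, smul_eq_mul, star_mul', Complex.star_def, Complex.conj_conj, hq]
    ring
  have hstarq : star q = q := by
    rw [hq, ← Matrix.star_dotProduct x x]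
  have hcross2 : ∑ α, (c α * starRingEnd ℂ lam) * (star (y α) ⬝ᵥ x) = q := by
    have : ∀ α, (c α * starRingEnd ℂ lam) * (star (y α) ⬝ᵥ x)
        = star ((starRingEnd ℂ (c α) * lam) * (star x ⬝ᵥ y α)) := by
      intro α
      rw [Matrix.star_dotProduct (y α) x]
      simp only [star_mul', Complex.star_def, Complex.conj_conj]
    simp only [this, ← star_sum]
    rw [show (∑ α, (starRingEnd ℂ (c α) * lam) * (star x ⬝ᵥ y α))
        = lam * ∑ α, (starRingEnd ℂ (c α)) * (star x ⬝ᵥ y α) by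
      rw [Finset.mul_sum]; exact Finset.sum_congr rfl fun α _ => by ring]
    rw [hd, ← mul_assoc, mul_comm lam, hlam1, one_mul, hstarq]
  have hcross1 : ∑ α, (starRingEnd ℂ (c α) * lam) * (star x ⬝ᵥ y α) = q := by
    rw [show (∑ α, (starRingEnd ℂ (c α) * lam) * (star x ⬝ᵥ y α))
        = lam * ∑ α, (starRingEnd ℂ (c α)) * (star x ⬝ᵥ y α) by
      rw [Finset.mul_sum]; exact Finset.sum_congr rfl fun α _ => by ring]
    rw [hd, ← mul_assoc, mul_comm lam, hlam1, one_mul]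
  have hkey : ∑ α, star (z α) ⬝ᵥ z α = (∑ α, star (y α) ⬝ᵥ y α) - q := by
    simp only [hterm, hlam1, mul_one]
    rw [Finset.sum_add_distrib, Finset.sum_sub_distrib, Finset.sum_sub_distrib,
      hcross1, hcross2, ← Finset.sum_mul, hc1, one_mul]
    ring
  have hnn : ∀ α ∈ Finset.univ, 0 ≤ star (z α) ⬝ᵥ z α := fun α _ =>
    dotProduct_star_self_nonneg (z α)
  have hsum0 : ∑ α, star (z α) ⬝ᵥ z α = 0 := by
    have h1 : 0 ≤ ∑ α, star (z α) ⬝ᵥ z α := Finset.sum_nonneg hnn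
    have h2 : ∑ α, star (z α) ⬝ᵥ z α ≤ 0 := by rw [hkey]; exact sub_nonpos.mpr hineq
    exact le_antisymm h2 h1
  have hzero : ∀ α, z α = 0 := by
    intro α
    have := (Finset.sum_eq_zero_iff_of_nonneg hnn).mp hsum0 α (Finset.mem_univ α)
    exact dotProduct_star_self_eq_zero.mp this
  constructor
  · intro α
    have := hzero α
    rw [hz] at this
    have := sub_eq_zero.mp this
    exact this
  · have : (∑ α, star (y α) ⬝ᵥ y α) - q = 0 := by rw [← hkey, hsum0]
    have h := sub_eq_zero.mp this
    simpa only [hconv, hq] using h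
end

section
/- Let L₁, …, L_m be pairwise commuting operators on a finite-dimensional Hilbert space and let ρ ⪰ 0 with support projection P (projection onto the range of ρ). If Σ_i L_i ρ L_i† = (1/2) Σ_i {L_i†L_i, ρ}, then (I−P) L_i P = 0 for all i, i.e., the support of ρ is invariant under each L_i. -/
open Matrix
open scoped ComplexOrder

/-!
Let `Q = 1 - P`; it is Hermitian and annihilates `ρ` on both sides. Compressing the stationarity
equation by `Q` kills the anticommutator terms, leaving `∑ (Q Lᵢ) ρ (Q Lᵢ)ᴴ = 0`, a sum of
positive semidefinite matrices. Hence every summand vanishes, which forces `Q Lᵢ ρ = 0`, and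
since the range of `P` is the range of `ρ`, also `Q Lᵢ P = 0`.
-/

open scoped MatrixOrder

namespace Matrix

variable {𝕜 ι l m n p : Type*} [RCLike 𝕜]

lemma mul_eq_zero_of_forall_mulVec_eq_mulVec {α : Type*} [Semiring α] [Fintype m] [Fintype n]
    [Fintype p] {X : Matrix l n α} {A : Matrix n m α} {B : Matrix n p α}
    (hBA : ∀ v, ∃ w, B *ᵥ v = A *ᵥ w) (hXA : X * A = 0) : X * B = 0 := by
  refine ext_iff_mulVec.mpr fun v => ?_
  obtain ⟨w, hw⟩ := hBA v
  rw [← mulVec_mulVec, hw, mulVec_mulVec, hXA, zero_mulVec, zero_mulVec]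

lemma PosSemidef.mul_eq_zero_of_mul_mul_conjTranspose_eq_zero [Fintype n] {A : Matrix m n 𝕜}
    {ρ : Matrix n n 𝕜} (hρ : ρ.PosSemidef) (h : A * ρ * Aᴴ = 0) : A * ρ = 0 := by
  classical
  obtain ⟨B, rfl⟩ := CStarAlgebra.nonneg_iff_eq_star_mul_self.mp hρ.nonneg
  rw [star_eq_conjTranspose] at h ⊢
  have hAB : A * Bᴴ = 0 :=
    self_mul_conjTranspose_eq_zero.mp (by simpa [conjTranspose_mul, Matrix.mul_assoc] using h)
  rw [← Matrix.mul_assoc, hAB, Matrix.zero_mul]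

lemma PosSemidef.eq_zero_of_sum_eq_zero [Fintype ι] {M : ι → Matrix n n 𝕜}
    (hM : ∀ i, (M i).PosSemidef) (h : ∑ i, M i = 0) (i : ι) : M i = 0 :=
  congrFun ((Fintype.sum_eq_zero_iff_of_nonneg fun j => (hM j).nonneg).mp h) i

theorem mul_mul_eq_zero_of_stationary [Fintype n] [Fintype ι] {L : ι → Matrix n n 𝕜}
    {ρ Q : Matrix n n 𝕜}
    (hρ : ρ.PosSemidef) (hQ : Q.IsHermitian) (hQρ : Q * ρ = 0)
    (hstat : ∑ i, L i * ρ * (L i)ᴴ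
        = (2 : 𝕜)⁻¹ • ∑ i, ((L i)ᴴ * L i * ρ + ρ * ((L i)ᴴ * L i)))
    (i : ι) : Q * L i * ρ = 0 := by
  have hρQ : ρ * Q = 0 := by
    simpa [hρ.isHermitian.eq, hQ.eq] using congrArg conjTranspose hQρ
  have hsum : ∑ j, Q * L j * ρ * (Q * L j)ᴴ = 0 := calc
    _ = Q * (∑ j, L j * ρ * (L j)ᴴ) * Q := by
      simp [Finset.mul_sum, Finset.sum_mul, conjTranspose_mul, hQ.eq, mul_assoc]
    _ = (2 : 𝕜)⁻¹ • ∑ j, (Q * (L j)ᴴ * L j * (ρ * Q) + Q * ρ * ((L j)ᴴ * L j * Q)) := by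
      rw [hstat, Matrix.mul_smul, Matrix.smul_mul, Finset.mul_sum, Finset.sum_mul]
      congr 1
      refine Finset.sum_congr rfl fun j _ => ?_
      noncomm_ring
    _ = 0 := by simp [hρQ, hQρ]
  exact hρ.mul_eq_zero_of_mul_mul_conjTranspose_eq_zero <|
    PosSemidef.eq_zero_of_sum_eq_zero (fun j => hρ.mul_mul_conjTranspose_same _) hsum i

end Matrix

theorem stmt13_general {n m : ℕ}
    (L : Fin m → Matrix (Fin n) (Fin n) ℂ)
    (ρ : Matrix (Fin n) (Fin n) ℂ) (hρ : ρ.PosSemidef)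
    (P : Matrix (Fin n) (Fin n) ℂ) (hP : P.IsHermitian) (hPproj : P * P = P)
    (hPrange : ∀ v : Fin n → ℂ, (∃ w, v = ρ.mulVec w) ↔ P.mulVec v = v)
    (hstat : ∑ i, L i * ρ * (L i)ᴴ
        = (2 : ℂ)⁻¹ • ∑ i, ((L i)ᴴ * L i * ρ + ρ * ((L i)ᴴ * L i))) :
    ∀ i, (1 - P) * L i * P = 0 := by
  have hPρ : P * ρ = ρ := ext_iff_mulVec.mpr fun w => by
    rw [← mulVec_mulVec]
    exact (hPrange _).mp ⟨w, rfl⟩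
  have hrange : ∀ v, ∃ w, P *ᵥ v = ρ *ᵥ w := fun v =>
    (hPrange _).mpr (by rw [mulVec_mulVec, hPproj])
  intro i
  refine mul_eq_zero_of_forall_mulVec_eq_mulVec hrange ?_
  exact mul_mul_eq_zero_of_stationary hρ (isHermitian_one.sub hP)
    (by rw [sub_mul, one_mul, hPρ, sub_self]) hstat i

/-- If pairwise commuting operators `L_i` satisfy the stationarity equation
`Σ L_i ρ L_iᴴ = ½ Σ {L_iᴴL_i, ρ}` for a PSD `ρ` with support projection `P`, then
`(I − P) L_i P = 0` for every `i`. -/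
theorem stmt13 {n m : ℕ}
    (L : Fin m → Matrix (Fin n) (Fin n) ℂ)
    (hcomm : ∀ i j, L i * L j = L j * L i)
    (ρ : Matrix (Fin n) (Fin n) ℂ) (hρ : ρ.PosSemidef)
    (P : Matrix (Fin n) (Fin n) ℂ) (hP : P.IsHermitian) (hPproj : P * P = P)
    (hPrange : ∀ v : Fin n → ℂ, (∃ w, v = ρ.mulVec w) ↔ P.mulVec v = v)
    (hstat : ∑ i, L i * ρ * (L i)ᴴ
        = (2 : ℂ)⁻¹ • ∑ i, ((L i)ᴴ * L i * ρ + ρ * ((L i)ᴴ * L i))) :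
    ∀ i, (1 - P) * L i * P = 0 :=
  stmt13_general L ρ hρ P hP hPproj hPrange hstat
end

section
/- Consider the Hilbert space H = (ℂ^{d+1})^{⊗N}, an invertible operator X on H, and jump operators L_{α,i} = X |0⟩_i⟨α| X⁻¹ for i ∈ {1,…,N}, α ∈ {1,…,d}, where |0⟩_i⟨α| acts on site i. Then the Lindbladian ℒ = Σ_{i,α} (L_{α,i}(·)L_{α,i}† − ½{L_{α,i}†L_{α,i}, ·}) satisfies: ℒ(ρ) = 0 for a PSD ρ if and only if ρ is proportional to |ψ⟩⟨ψ| with |ψ⟩ = X|0⟩^{⊗N}. -/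
/-!
For a PSD `ρ` with `ℒ(ρ) = 0`, one has `⟨w, ℒ(ρ) w⟩ = Σ ⟨L†w, ρ L†w⟩` whenever the anticommutator
terms vanish at `w`, which happens for `w ∈ ker ρ` and for the dark vector `ψ`. Hence `ker ρ` is
invariant under every `L†` and contains every `L†ψ`; dually `(ker ρ)ᗮ ⊇ range ρ` and
`(ker ρ)ᗮ ∩ ψᗮ` are invariant under every `L`. Conjugated by `X⁻¹`, each jump lowers the number
of excited sites, so every nonzero `L`-invariant subspace contains a nonzero common null vector,
i.e. it contains `ψ`. Thus `ψ ∈ (ker ρ)ᗮ` as soon as `ρ ≠ 0`, while `(ker ρ)ᗮ ∩ ψᗮ = 0`: every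
column of `ρ` is a multiple of `ψ`, and hermiticity forces `ρ ∝ |ψ⟩⟨ψ|`.
-/

open Matrix
open scoped ComplexOrder

/-- The single-site operator `|0⟩_i⟨α|` acting on tensor factor `i` of
`(ℂ^{d+1})^{⊗N}`, realized on the basis indexed by `Fin N → Fin (d+1)`. -/
noncomputable def siteOp (N d : ℕ) (i : Fin N) (α : Fin (d + 1)) :
    Matrix (Fin N → Fin (d + 1)) (Fin N → Fin (d + 1)) ℂ :=
  Matrix.of fun s t => if t i = α ∧ s = Function.update t i 0 then 1 else 0

section Gkls

variable {𝕜 ι n : Type*} [RCLike 𝕜] [Fintype n]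

lemma star_dotProduct_mulVec_eq (A : Matrix n n 𝕜) (a b : n → 𝕜) :
    star a ⬝ᵥ A *ᵥ b = star (Aᴴ *ᵥ a) ⬝ᵥ b := by
  rw [star_mulVec, conjTranspose_conjTranspose, dotProduct_mulVec]

def gklsGenerator (s : Finset ι) (L : ι → Matrix n n 𝕜) (ρ : Matrix n n 𝕜) : Matrix n n 𝕜 :=
  ∑ k ∈ s, (L k * ρ * (L k)ᴴ - (2 : 𝕜)⁻¹ • ((L k)ᴴ * L k * ρ + ρ * ((L k)ᴴ * L k)))

lemma gklsGenerator_product {κ : Type*} (s : Finset ι) (t : Finset κ)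
    (L : ι → κ → Matrix n n 𝕜) (ρ : Matrix n n 𝕜) :
    gklsGenerator (s ×ˢ t) (fun k => L k.1 k.2) ρ = ∑ i ∈ s, ∑ α ∈ t,
      (L i α * ρ * (L i α)ᴴ - (2 : 𝕜)⁻¹ • ((L i α)ᴴ * L i α * ρ + ρ * ((L i α)ᴴ * L i α))) :=
  Finset.sum_product' (f := fun i α =>
    L i α * ρ * (L i α)ᴴ - (2 : 𝕜)⁻¹ • ((L i α)ᴴ * L i α * ρ + ρ * ((L i α)ᴴ * L i α))) ..

variable {s : Finset ι} {L : ι → Matrix n n 𝕜} {ρ : Matrix n n 𝕜}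

lemma dotProduct_gklsGenerator_mulVec (w : n → 𝕜) :
    star w ⬝ᵥ gklsGenerator s L ρ *ᵥ w = ∑ k ∈ s, (star ((L k)ᴴ *ᵥ w) ⬝ᵥ ρ *ᵥ (L k)ᴴ *ᵥ w
      - (2 : 𝕜)⁻¹ * star w ⬝ᵥ ((L k)ᴴ * L k * ρ + ρ * ((L k)ᴴ * L k)) *ᵥ w) := by
  simp only [gklsGenerator, sum_mulVec, dotProduct_sum, sub_mulVec, dotProduct_sub, smul_mulVec,
    dotProduct_smul, smul_eq_mul]
  refine Finset.sum_congr rfl fun k _ => ?_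
  rw [Matrix.mul_assoc, ← mulVec_mulVec, star_dotProduct_mulVec_eq, ← mulVec_mulVec]

/-- The terms `⟨L kᴴ w, ρ L kᴴ w⟩` that remain are nonnegative and sum to `⟨w, ℒ(ρ) w⟩ = 0`. -/
lemma mulVec_conjTranspose_mulVec_eq_zero_of_gklsGenerator_eq_zero (hρ : ρ.PosSemidef)
    (h : gklsGenerator s L ρ = 0) {w : n → 𝕜}
    (hw : ∀ k ∈ s, star w ⬝ᵥ ((L k)ᴴ * L k * ρ + ρ * ((L k)ᴴ * L k)) *ᵥ w = 0)
    {k : ι} (hk : k ∈ s) : ρ *ᵥ (L k)ᴴ *ᵥ w = 0 := by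
  have hsum : ∑ k ∈ s, star ((L k)ᴴ *ᵥ w) ⬝ᵥ ρ *ᵥ (L k)ᴴ *ᵥ w = 0 := by
    rw [← dotProduct_zero (star w), ← zero_mulVec w, ← h, dotProduct_gklsGenerator_mulVec]
    exact Finset.sum_congr rfl fun k hk => by rw [hw k hk, mul_zero, sub_zero]
  rw [← hρ.dotProduct_mulVec_zero_iff]
  exact (Finset.sum_eq_zero_iff_of_nonneg fun k _ => hρ.dotProduct_mulVec_nonneg _).mp hsum k hk

lemma mulVec_conjTranspose_mulVec_eq_zero_of_mulVec_eq_zero (hρ : ρ.PosSemidef)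
    (h : gklsGenerator s L ρ = 0) {w : n → 𝕜} (hw : ρ *ᵥ w = 0) {k : ι} (hk : k ∈ s) :
    ρ *ᵥ (L k)ᴴ *ᵥ w = 0 := by
  refine mulVec_conjTranspose_mulVec_eq_zero_of_gklsGenerator_eq_zero hρ h (fun k _ => ?_) hk
  rw [add_mulVec, dotProduct_add, ← mulVec_mulVec, hw, mulVec_zero, dotProduct_zero, zero_add,
    star_dotProduct_mulVec_eq, conjTranspose_mul, hρ.1.eq, ← mulVec_mulVec, hw, mulVec_zero,
    star_zero, zero_dotProduct]

lemma mulVec_conjTranspose_mulVec_eq_zero_of_forall_mulVec_eq_zero (hρ : ρ.PosSemidef)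
    (h : gklsGenerator s L ρ = 0) {w : n → 𝕜} (hw : ∀ k ∈ s, L k *ᵥ w = 0) {k : ι}
    (hk : k ∈ s) : ρ *ᵥ (L k)ᴴ *ᵥ w = 0 := by
  refine mulVec_conjTranspose_mulVec_eq_zero_of_gklsGenerator_eq_zero hρ h (fun k hk => ?_) hk
  have hLL : ((L k)ᴴ * L k) *ᵥ w = 0 := by rw [← mulVec_mulVec, hw k hk, mulVec_zero]
  rw [add_mulVec, dotProduct_add, ← mulVec_mulVec w ρ, hLL, mulVec_zero, dotProduct_zero, add_zero,
    ← mulVec_mulVec w _ ρ, star_dotProduct_mulVec_eq, conjTranspose_mul,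
    conjTranspose_conjTranspose, hLL, star_zero, zero_dotProduct]

lemma gklsGenerator_smul_vecMulVec_eq_zero {ψ : n → 𝕜} (hψ : ∀ k ∈ s, L k *ᵥ ψ = 0) (c : 𝕜) :
    gklsGenerator s L (c • vecMulVec ψ (star ψ)) = 0 := by
  refine Finset.sum_eq_zero fun k hk => ?_
  have hleft : L k * (c • vecMulVec ψ (star ψ)) = 0 := by
    rw [Matrix.mul_smul, mul_vecMulVec, hψ k hk, zero_vecMulVec, smul_zero]
  have hright : c • vecMulVec ψ (star ψ) * (L k)ᴴ = 0 := by
    rw [Matrix.smul_mul, vecMulVec_mul, ← star_mulVec, hψ k hk, star_zero, vecMulVec_zero,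
      smul_zero]
  rw [hleft, Matrix.zero_mul, Matrix.mul_assoc, hleft, Matrix.mul_zero, ← Matrix.mul_assoc,
    hright, Matrix.zero_mul, add_zero, smul_zero, sub_zero]

end Gkls

section Stationary

variable {𝕜 ι n : Type*} [RCLike 𝕜] [Fintype n]

def dotOrthogonal (K : Set (n → 𝕜)) : Submodule 𝕜 (n → 𝕜) where
  carrier := {u | ∀ z ∈ K, star z ⬝ᵥ u = 0}
  add_mem' hu hv z hz := by rw [dotProduct_add, hu z hz, hv z hz, add_zero]
  zero_mem' _ _ := dotProduct_zero _
  smul_mem' c _ hu z hz := by rw [dotProduct_smul, hu z hz, smul_zero]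

lemma mulVec_mem_dotOrthogonal {K : Set (n → 𝕜)} {A : Matrix n n 𝕜}
    (hK : ∀ z ∈ K, Aᴴ *ᵥ z ∈ K) {u : n → 𝕜} (hu : u ∈ dotOrthogonal K) :
    A *ᵥ u ∈ dotOrthogonal K :=
  fun z hz => by rw [star_dotProduct_mulVec_eq]; exact hu _ (hK z hz)

lemma mulVec_mem_dotOrthogonal_ker {ρ : Matrix n n 𝕜} (hρ : ρ.IsHermitian) (v : n → 𝕜) :
    ρ *ᵥ v ∈ dotOrthogonal {z | ρ *ᵥ z = 0} :=
  fun z (hz : ρ *ᵥ z = 0) => by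
    rw [star_dotProduct_mulVec_eq, hρ.eq, hz, star_zero, zero_dotProduct]

lemma exists_eq_smul_vecMulVec_of_forall_mulVec_eq_smul {ρ : Matrix n n 𝕜} (hρ : ρ.IsHermitian)
    {ψ : n → 𝕜} (h : ∀ v, ∃ c : 𝕜, ρ *ᵥ v = c • ψ) : ∃ c : 𝕜, ρ = c • vecMulVec ψ (star ψ) := by
  choose f hf using h
  by_cases hψ : ψ = 0
  · refine ⟨0, ext_iff_mulVec.mpr fun v => ?_⟩
    rw [hf, hψ, smul_zero, zero_smul, zero_mulVec]
  have hnorm : star ψ ⬝ᵥ ψ ≠ 0 := fun h => hψ (dotProduct_star_self_eq_zero.mp h)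
  -- `⟨ψ, ρ v⟩ = ⟨ρ ψ, v⟩` determines the coefficient `f v`.
  have hcoeff : ∀ v, f v * (star ψ ⬝ᵥ ψ) = star (f ψ) * (star ψ ⬝ᵥ v) := fun v => by
    rw [← smul_eq_mul, ← dotProduct_smul, ← hf, star_dotProduct_mulVec_eq, hρ.eq, hf, star_smul,
      smul_dotProduct, smul_eq_mul]
  refine ⟨star (f ψ) / (star ψ ⬝ᵥ ψ), ext_iff_mulVec.mpr fun v => ?_⟩
  rw [hf, smul_mulVec, vecMulVec_mulVec, op_smul_eq_smul, smul_smul, div_mul_eq_mul_div,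
    ← hcoeff v, mul_div_cancel_right₀ _ hnorm]

theorem gklsGenerator_eq_zero_iff {s : Finset ι} {L : ι → Matrix n n 𝕜} {ψ : n → 𝕜}
    (hψ : ψ ≠ 0) (hLψ : ∀ k ∈ s, L k *ᵥ ψ = 0)
    (hinv : ∀ W : Submodule 𝕜 (n → 𝕜), (∀ k ∈ s, ∀ u ∈ W, L k *ᵥ u ∈ W) → W ≠ ⊥ → ψ ∈ W)
    {ρ : Matrix n n 𝕜} (hρ : ρ.PosSemidef) :
    gklsGenerator s L ρ = 0 ↔ ∃ c : 𝕜, ρ = c • vecMulVec ψ (star ψ) := by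
  refine ⟨fun h => exists_eq_smul_vecMulVec_of_forall_mulVec_eq_smul hρ.1 fun v => ?_,
    fun ⟨c, hc⟩ => hc ▸ gklsGenerator_smul_vecMulVec_eq_zero hLψ c⟩
  set K : Set (n → 𝕜) := {z | ρ *ᵥ z = 0}
  have hK : ∀ k ∈ s, ∀ z ∈ K, (L k)ᴴ *ᵥ z ∈ K := fun k hk z hz =>
    mulVec_conjTranspose_mulVec_eq_zero_of_mulVec_eq_zero hρ h hz hk
  have hψK : ∀ k ∈ s, ∀ z ∈ insert ψ K, (L k)ᴴ *ᵥ z ∈ insert ψ K := by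
    rintro k hk z (rfl | hz)
    · exact Set.mem_insert_of_mem _
        (mulVec_conjTranspose_mulVec_eq_zero_of_forall_mulVec_eq_zero hρ h hLψ hk)
    · exact Set.mem_insert_of_mem _ (hK k hk z hz)
  have hperp : dotOrthogonal (insert ψ K) = ⊥ := by
    by_contra hne
    have hψψ := hinv _ (fun k hk _ => mulVec_mem_dotOrthogonal (hψK k hk)) hne ψ
      (Set.mem_insert _ _)
    exact hψ (dotProduct_star_self_eq_zero.mp hψψ)
  by_cases hv : ρ *ᵥ v = 0
  · exact ⟨0, by rw [hv, zero_smul]⟩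
  have hψ_mem : ψ ∈ dotOrthogonal K :=
    hinv _ (fun k hk _ => mulVec_mem_dotOrthogonal (hK k hk))
      ((Submodule.ne_bot_iff _).mpr ⟨_, mulVec_mem_dotOrthogonal_ker hρ.1 v, hv⟩)
  have hnorm : star ψ ⬝ᵥ ψ ≠ 0 := fun h => hψ (dotProduct_star_self_eq_zero.mp h)
  refine ⟨(star ψ ⬝ᵥ ρ *ᵥ v) / (star ψ ⬝ᵥ ψ), sub_eq_zero.mp ?_⟩
  rw [← Submodule.mem_bot 𝕜, ← hperp]
  rintro z (rfl | hz)
  · rw [dotProduct_sub, dotProduct_smul, smul_eq_mul, div_mul_cancel₀ _ hnorm, sub_self]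
  · exact Submodule.sub_mem _ (mulVec_mem_dotOrthogonal_ker hρ.1 v)
      (Submodule.smul_mem _ _ hψ_mem) z hz

end Stationary

lemma exists_ne_zero_forall_eq_zero_of_mapsTo {V J : Type*} [Zero V] {T : J → V → V}
    {F : ℕ → Set V} (hF : F 0 ⊆ {0}) (hT : ∀ j m, Set.MapsTo (T j) (F (m + 1)) (F m))
    {W : Set V} (hW : ∀ j, Set.MapsTo (T j) W W) {m : ℕ} {x : V} (hxW : x ∈ W) (hxF : x ∈ F m)
    (hx : x ≠ 0) : ∃ y ∈ W, y ≠ 0 ∧ ∀ j, T j y = 0 := by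
  induction m generalizing x with
  | zero => exact absurd (hF hxF) hx
  | succ m ih =>
    by_cases hdark : ∀ j, T j x = 0
    · exact ⟨x, hxW, hx, hdark⟩
    push Not at hdark
    obtain ⟨j, hj⟩ := hdark
    exact ih (hW j hxW) (hT j m hxF) hj

section SiteOp

variable {N d : ℕ}

lemma hammingNorm_update_of_eq_zero {t : Fin N → Fin (d + 1)} {i : Fin N} (ht : t i = 0)
    {α : Fin (d + 1)} (hα : α ≠ 0) : hammingNorm (Function.update t i α) = hammingNorm t + 1 := by
  have hsupp : Finset.univ.filter (Function.update t i α · ≠ 0)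
      = insert i (Finset.univ.filter (t · ≠ 0)) := by
    ext j
    by_cases hj : j = i
    · subst hj; simp [hα]
    · simp [hj]
  rw [hammingNorm, hsupp, Finset.card_insert_of_notMem (by simp [ht])]
  rfl

lemma siteOp_mulVec_apply (i : Fin N) (α : Fin (d + 1)) (z : (Fin N → Fin (d + 1)) → ℂ)
    (t : Fin N → Fin (d + 1)) :
    (siteOp N d i α *ᵥ z) t = if t i = 0 then z (Function.update t i α) else 0 := by
  simp only [siteOp, mulVec, of_apply, dotProduct, ite_mul, one_mul, zero_mul]
  split_ifs with ht
  · rw [Finset.sum_eq_single_of_mem (Function.update t i α) (Finset.mem_univ _)]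
    · rw [if_pos ⟨Function.update_self .., by rw [Function.update_idem, ← ht,
        Function.update_eq_self]⟩]
    · rintro u - hu
      refine if_neg fun ⟨hui, htu⟩ => hu ?_
      rw [htu, Function.update_idem, ← hui, Function.update_eq_self]
  · exact Finset.sum_eq_zero fun u _ =>
      if_neg fun ⟨_, htu⟩ => ht (by rw [htu, Function.update_self])

def belowWeight (m : ℕ) : Set ((Fin N → Fin (d + 1)) → ℂ) :=
  {z | ∀ t, m ≤ hammingNorm t → z t = 0}

lemma belowWeight_zero_subset : belowWeight (N := N) (d := d) 0 ⊆ {0} :=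
  fun _ hz => funext fun t => hz t (Nat.zero_le _)

lemma mem_belowWeight_succ_card (z : (Fin N → Fin (d + 1)) → ℂ) : z ∈ belowWeight (N + 1) :=
  fun t ht => absurd (hammingNorm_le_card_fintype.trans_lt (by simp) : hammingNorm t < N + 1)
    ht.not_gt

lemma mapsTo_siteOp_mulVec_belowWeight (i : Fin N) {α : Fin (d + 1)} (hα : α ≠ 0) (m : ℕ) :
    Set.MapsTo (siteOp N d i α *ᵥ ·) (belowWeight (m + 1)) (belowWeight m) := by
  intro z hz t ht
  dsimp only
  rw [siteOp_mulVec_apply]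
  split_ifs with hti
  · exact hz _ (by rw [hammingNorm_update_of_eq_zero hti hα]; omega)
  · rfl

lemma siteOp_mulVec_single_zero (i : Fin N) {α : Fin (d + 1)} (hα : α ≠ 0) :
    siteOp N d i α *ᵥ Pi.single 0 1 = 0 := by
  funext t
  rw [siteOp_mulVec_apply]
  split_ifs
  · exact Pi.single_eq_of_ne (fun h => hα (by simpa using congrFun h i)) _
  · rfl

lemma eq_smul_single_zero_of_forall_siteOp_mulVec_eq_zero {z : (Fin N → Fin (d + 1)) → ℂ}
    (hz : ∀ i α, α ≠ 0 → siteOp N d i α *ᵥ z = 0) : z = z 0 • Pi.single 0 1 := by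
  funext t
  by_cases ht : t = 0
  · subst ht; simp
  obtain ⟨i, hi⟩ : ∃ i, t i ≠ 0 := by simpa [funext_iff] using ht
  have h := congrFun (hz i (t i) hi) (Function.update t i 0)
  rw [siteOp_mulVec_apply, if_pos (Function.update_self ..), Function.update_idem,
    Function.update_eq_self] at h
  simp [h, ht]

end SiteOp

section Conjugation

variable {R n : Type*} [CommRing R] [Fintype n] [DecidableEq n] {X : Matrix n n R}

lemma conj_mulVec_mulVec (hX : IsUnit X) (A : Matrix n n R) (v : n → R) :
    (X * A * X⁻¹) *ᵥ X *ᵥ v = X *ᵥ A *ᵥ v := by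
  rw [mulVec_mulVec, Matrix.mul_assoc, Matrix.nonsing_inv_mul X ((isUnit_iff_isUnit_det X).mp hX),
    Matrix.mul_one, mulVec_mulVec]

lemma inv_mulVec_conj_mulVec (hX : IsUnit X) (A : Matrix n n R) (v : n → R) :
    X⁻¹ *ᵥ (X * A * X⁻¹) *ᵥ v = A *ᵥ X⁻¹ *ᵥ v := by
  rw [mulVec_mulVec, ← Matrix.mul_assoc, ← Matrix.mul_assoc,
    Matrix.nonsing_inv_mul X ((isUnit_iff_isUnit_det X).mp hX), Matrix.one_mul, mulVec_mulVec]

end Conjugation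

/-- Iterating the jumps lowers the number of excitations of `X⁻¹ u`, so inside `W` it ends at a
nonzero common null vector, and those are the multiples of `X |0…0⟩`. -/
lemma mulVec_single_zero_mem_of_invariant {N d : ℕ}
    {X : Matrix (Fin N → Fin (d + 1)) (Fin N → Fin (d + 1)) ℂ} (hX : IsUnit X)
    {W : Submodule ℂ ((Fin N → Fin (d + 1)) → ℂ)}
    (hW : ∀ i α, α ≠ 0 → ∀ u ∈ W, (X * siteOp N d i α * X⁻¹) *ᵥ u ∈ W) (hW₀ : W ≠ ⊥) :
    X *ᵥ Pi.single 0 1 ∈ W := by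
  have hinj : Function.Injective X⁻¹.mulVec :=
    mulVec_injective_iff_isUnit.mpr (isUnit_nonsing_inv_iff.mpr hX)
  obtain ⟨x, hxW, hx⟩ := Submodule.exists_mem_ne_zero_of_ne_bot hW₀
  obtain ⟨y, hyW, hy0, hdark⟩ := exists_ne_zero_forall_eq_zero_of_mapsTo
    (J := Fin N × {α : Fin (d + 1) // α ≠ 0})
    (T := fun j v => (X * siteOp N d j.1 j.2 * X⁻¹) *ᵥ v)
    (F := fun m => {v | X⁻¹ *ᵥ v ∈ belowWeight m})
    (fun v hv => hinj ((belowWeight_zero_subset hv).trans (mulVec_zero _).symm))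
    (fun j m v hv => by
      simpa [inv_mulVec_conj_mulVec hX] using
        mapsTo_siteOp_mulVec_belowWeight j.1 j.2.2 m hv)
    (fun j u hu => hW j.1 j.2 j.2.2 u hu) hxW (mem_belowWeight_succ_card _) hx
  have hXy : X⁻¹ *ᵥ y = (X⁻¹ *ᵥ y) 0 • Pi.single 0 1 :=
    eq_smul_single_zero_of_forall_siteOp_mulVec_eq_zero fun i α hα => by
      rw [← inv_mulVec_conj_mulVec hX, hdark ⟨i, α, hα⟩, mulVec_zero]
  set c := (X⁻¹ *ᵥ y) 0
  have hy : y = c • X *ᵥ Pi.single 0 1 := by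
    rw [← mulVec_smul, ← hXy, mulVec_mulVec,
      Matrix.mul_nonsing_inv X ((isUnit_iff_isUnit_det X).mp hX), one_mulVec]
  have hc : c ≠ 0 := fun hc => hy0 (by rw [hy, hc, zero_smul])
  exact (W.smul_mem_iff hc).mp (hy ▸ hyW)

/-- For jump operators `L_{α,i} = X |0⟩_i⟨α| X⁻¹` (`X` invertible, `α ≠ 0`), the
GKLS generator `ℒ = Σ_{i,α} (L ρ Lᴴ − ½{LᴴL, ρ})` annihilates a PSD `ρ` iff `ρ` is
proportional to `|ψ⟩⟨ψ|` with `ψ = X|0⟩^{⊗N}`. -/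
theorem stmt14 (N d : ℕ)
    (X : Matrix (Fin N → Fin (d + 1)) (Fin N → Fin (d + 1)) ℂ) (hX : IsUnit X)
    (L : Fin N → Fin (d + 1) →
        Matrix (Fin N → Fin (d + 1)) (Fin N → Fin (d + 1)) ℂ)
    (hL : ∀ i α, L i α = X * siteOp N d i α * X⁻¹)
    (ψ : (Fin N → Fin (d + 1)) → ℂ)
    (hψ : ψ = X.mulVec fun s => if s = (fun _ => 0) then 1 else 0)
    (ρ : Matrix (Fin N → Fin (d + 1)) (Fin N → Fin (d + 1)) ℂ)
    (hρ : ρ.PosSemidef) :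
    (∑ i : Fin N, ∑ α ∈ Finset.univ.filter (fun α : Fin (d + 1) => α ≠ 0),
        (L i α * ρ * (L i α)ᴴ
          - (2 : ℂ)⁻¹ • ((L i α)ᴴ * L i α * ρ + ρ * ((L i α)ᴴ * L i α)))) = 0
    ↔ ∃ c : ℂ, ρ = c • Matrix.vecMulVec ψ (star ψ) := by
  obtain rfl : ψ = X *ᵥ Pi.single 0 1 := by
    rw [hψ]; congr 1; funext s; rw [Pi.single_apply]; rfl
  rw [← gklsGenerator_product]
  refine gklsGenerator_eq_zero_iff ?_ ?_ ?_ hρ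
  · rw [Ne, ← mulVec_zero X, (mulVec_injective_iff_isUnit.mpr hX).eq_iff]
    exact Pi.single_ne_zero_iff.mpr one_ne_zero
  · rintro ⟨i, α⟩ hk
    rw [hL, conj_mulVec_mulVec hX, siteOp_mulVec_single_zero i (by simpa using hk), mulVec_zero]
  · exact fun W hW => mulVec_single_zero_mem_of_invariant hX fun i α hα =>
      hL i α ▸ hW (i, α) (by simpa using hα)
end

section
/- Let h and X be Hermitian operators on a finite-dimensional Hilbert space with 0 ⪯ X ⪯ I, and set R(h) := √(I−X) h √(I−X) − h + ½{h, X}. Then ‖R(h)‖ ≤ 2‖h‖‖X‖². -/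
open Matrix
open scoped ComplexOrder Matrix.Norms.L2Operator

/-- The square root of a positive semidefinite matrix, as defined in Mathlib (Dec 2024),
`Matrix.PosSemidef.sqrt`, which has since been removed. -/
noncomputable def Matrix.PosSemidef.sqrt {𝕜 : Type*} [RCLike 𝕜] {n : Type*} [Fintype n]
    [DecidableEq n] {A : Matrix n n 𝕜} (hA : A.PosSemidef) : Matrix n n 𝕜 :=
  hA.1.eigenvectorUnitary.1 * diagonal ((↑) ∘ (√·) ∘ hA.1.eigenvalues) *
    (star hA.1.eigenvectorUnitary : Matrix n n 𝕜)

/-!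
Write `√(1 - X) = 1 - X/2 + Y`. Then `R(h)` expands as
`{h, Y} + ¼ XhX - ½ (XhY + YhX) + YhY`, a sum whose terms are controlled by `‖X‖ ≤ 1` and
`‖Y‖ ≤ ‖X‖²/2`. The latter bound is the scalar inequality `|√(1-t) - 1 + t/2| ≤ t²/2` for
`t ≤ 1`, transported to `X` by the continuous functional calculus, since the spectrum of `X`
lies in `[-‖X‖, 1]`.
-/

open scoped MatrixOrder

lemma Real.abs_sqrt_one_sub_sub_one_add_half_le {t : ℝ} (ht : t ≤ 1) :
    |√(1 - t) - 1 + 2⁻¹ * t| ≤ t ^ 2 / 2 := by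
  have hs : √(1 - t) ^ 2 = 1 - t := Real.sq_sqrt (by linarith)
  rw [abs_le]
  constructor
  · nlinarith [Real.sqrt_nonneg (1 - t), sq_nonneg (√(1 - t) - (1 - t / 2 - t ^ 2 / 2))]
  · nlinarith [Real.sqrt_nonneg (1 - t), sq_nonneg (√(1 - t) - (1 - t / 2))]

section NormedAlgebra

variable {𝕜 A : Type*} [RCLike 𝕜] [NormedRing A] [NormedAlgebra 𝕜 A]

lemma mul_mul_sub_add_anticomm_eq (h x y : A) :
    (1 - (2⁻¹ : 𝕜) • x + y) * h * (1 - (2⁻¹ : 𝕜) • x + y) - h + (2⁻¹ : 𝕜) • (h * x + x * h)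
      = (h * y + y * h) + (4⁻¹ : 𝕜) • (x * h * x) + (-2⁻¹ : 𝕜) • (x * h * y + y * h * x)
        + y * h * y := by
  simp only [sub_mul, mul_sub, add_mul, mul_add, smul_mul_assoc, mul_smul_comm, smul_add,
    one_mul, mul_one]
  module

lemma norm_mul_mul_sub_add_anticomm_le {s x : A} (h : A) (hx : ‖x‖ ≤ 1)
    (hs : ‖s - 1 + (2⁻¹ : 𝕜) • x‖ ≤ ‖x‖ ^ 2 / 2) :
    ‖s * h * s - h + (2⁻¹ : 𝕜) • (h * x + x * h)‖ ≤ 2 * ‖h‖ * ‖x‖ ^ 2 := by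
  obtain ⟨y, rfl⟩ : ∃ y, s = 1 - (2⁻¹ : 𝕜) • x + y := ⟨s - 1 + (2⁻¹ : 𝕜) • x, by abel⟩
  rw [show 1 - (2⁻¹ : 𝕜) • x + y - 1 + (2⁻¹ : 𝕜) • x = y by abel] at hs
  rw [mul_mul_sub_add_anticomm_eq]
  calc _ ≤ ‖h * y + y * h‖ + ‖(4⁻¹ : 𝕜) • (x * h * x)‖
          + ‖(-2⁻¹ : 𝕜) • (x * h * y + y * h * x)‖ + ‖y * h * y‖ := norm_add₄_le
    _ ≤ (‖h‖ * ‖y‖ + ‖y‖ * ‖h‖) + 4⁻¹ * (‖x‖ * ‖h‖ * ‖x‖)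
          + 2⁻¹ * (‖x‖ * ‖h‖ * ‖y‖ + ‖y‖ * ‖h‖ * ‖x‖) + ‖y‖ * ‖h‖ * ‖y‖ := by
      simp only [norm_smul, norm_neg, norm_inv, RCLike.norm_ofNat]
      gcongr
      · exact norm_add_le_of_le (norm_mul_le _ _) (norm_mul_le _ _)
      · exact norm_mul₃_le
      · exact norm_add_le_of_le norm_mul₃_le norm_mul₃_le
      · exact norm_mul₃_le
    _ = ‖h‖ * (2 * ‖y‖ + ‖x‖ ^ 2 / 4 + ‖x‖ * ‖y‖ + ‖y‖ ^ 2) := by ring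
    _ ≤ ‖h‖ * (2 * ‖x‖ ^ 2) := by
      gcongr
      have hxy : ‖x‖ * ‖y‖ ≤ ‖y‖ := mul_le_of_le_one_left (norm_nonneg y) hx
      have hy2 : ‖y‖ ^ 2 ≤ (‖x‖ ^ 2 / 2) ^ 2 := by gcongr
      have hx4 : ‖x‖ ^ 4 ≤ ‖x‖ ^ 2 := pow_le_pow_of_le_one (norm_nonneg x) hx (by norm_num)
      nlinarith
    _ = 2 * ‖h‖ * ‖x‖ ^ 2 := by ring

end NormedAlgebra

lemma cfc_sqrt_one_sub {A : Type*} [CStarAlgebra A] {a : A} (ha : IsSelfAdjoint a) :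
    cfc Real.sqrt (1 - a) = cfc (fun t : ℝ => √(1 - t)) a := by
  rw [cfc_comp' Real.sqrt (fun t : ℝ => 1 - t) a, cfc_sub .., cfc_const_one ℝ a, cfc_id' ℝ a]

lemma norm_cfc_sqrt_one_sub_sub_one_add_half_le {A : Type*} [CStarAlgebra A] [PartialOrder A]
    [StarOrderedRing A] {a : A} (ha : IsSelfAdjoint a) (ha1 : a ≤ 1) :
    ‖cfc Real.sqrt (1 - a) - 1 + (2⁻¹ : ℂ) • a‖ ≤ ‖a‖ ^ 2 / 2 := by
  nontriviality A
  have hcfc : cfc Real.sqrt (1 - a) - 1 + (2⁻¹ : ℂ) • a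
      = cfc (fun t : ℝ => √(1 - t) - 1 + 2⁻¹ * t) a := by
    rw [cfc_sqrt_one_sub ha, cfc_add .., cfc_sub .., cfc_const_one ℝ a, cfc_const_mul ..,
      cfc_id' ℝ a, ← Complex.coe_smul]
    push_cast
    rfl
  rw [hcfc]
  refine norm_cfc_le (by positivity) fun t ht => ?_
  have ht1 : t ≤ 1 := (CFC.le_one_iff a).mp ha1 t ht
  have hta : |t| ≤ ‖a‖ := spectrum.norm_le_norm_of_mem ht
  rw [Real.norm_eq_abs]
  refine (Real.abs_sqrt_one_sub_sub_one_add_half_le ht1).trans ?_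
  rw [← sq_abs t]
  gcongr

lemma Matrix.PosSemidef.sqrt_eq_cfc {𝕜 n : Type*} [RCLike 𝕜] [Fintype n] [DecidableEq n]
    {A : Matrix n n 𝕜} (hA : A.PosSemidef) : hA.sqrt = cfc Real.sqrt A := by
  rw [hA.1.cfc_eq, Matrix.IsHermitian.cfc, Unitary.conjStarAlgAut_apply]
  rfl

theorem stmt16_general {n : ℕ} (h X : Matrix (Fin n) (Fin n) ℂ)
    (hX0 : X.PosSemidef)
    (hX1 : ((1 : Matrix (Fin n) (Fin n) ℂ) - X).PosSemidef) :
    ‖hX1.sqrt * h * hX1.sqrt - h + (2 : ℂ)⁻¹ • (h * X + X * h)‖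
      ≤ 2 * ‖h‖ * ‖X‖ ^ 2 := by
  have hX : ‖X‖ ≤ 1 := (CStarAlgebra.norm_le_one_iff_of_nonneg X hX0.nonneg).mpr hX1
  rw [hX1.sqrt_eq_cfc]
  exact norm_mul_mul_sub_add_anticomm_le h hX
    (norm_cfc_sqrt_one_sub_sub_one_add_half_le hX0.isHermitian hX1)

/-- For Hermitian `h` and `0 ⪯ X ⪯ I`, the remainder
`R(h) = √(I−X) h √(I−X) − h + ½{h, X}` satisfies `‖R(h)‖ ≤ 2‖h‖‖X‖²`. -/
theorem stmt16 {n : ℕ} (h X : Matrix (Fin n) (Fin n) ℂ)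
    (hh : h.IsHermitian)
    (hX0 : X.PosSemidef)
    (hX1 : ((1 : Matrix (Fin n) (Fin n) ℂ) - X).PosSemidef) :
    ‖hX1.sqrt * h * hX1.sqrt - h + (2 : ℂ)⁻¹ • (h * X + X * h)‖
      ≤ 2 * ‖h‖ * ‖X‖ ^ 2 :=
  stmt16_general h X hX0 hX1
end

section
/- Let P and Q be orthogonal projections on a finite-dimensional Hilbert space, and let c := sup{ |⟨v,u⟩| / (‖v‖‖u‖) : 0 ≠ v ∈ ran P ∩ (ran P ∩ ran Q)^⊥, 0 ≠ u ∈ ran Q ∩ (ran P ∩ ran Q)^⊥ } < 1 (with c := 0 if either space is trivial). Then for every n ≥ 1, ‖(PQ)^n − P∧Q‖ ≤ c^n, where P∧Q is the orthogonal projection onto ran P ∩ ran Q. -/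
/-!
Write `p' = P - R` and `q' = Q - R`. Since `R` is absorbed by `P` and `Q` on both sides, `p'` and `q'`
are orthogonal projections onto the parts of `ran P` and `ran Q` orthogonal to `ran P ∩ ran Q`,
`p' q' = PQ - R` and `(PQ - R)^m = (PQ)^m - R`. So it suffices that `‖p' q'‖ ≤ c`: for `u = q' x` and
`v = p' u` we have `‖v‖² = ⟪v, u⟫ ≤ c ‖v‖ ‖u‖` and `‖u‖ ≤ ‖x‖`, so `‖p' q' x‖ ≤ c ‖x‖`.
-/

open Matrix WithLp
open scoped Matrix.Norms.L2Operator

theorem IsIdempotentElem.sub_pow_eq {R : Type*} [Ring R] {a r : R} (hr : IsIdempotentElem r)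
    (har : a * r = r) (hra : r * a = r) {m : ℕ} (hm : m ≠ 0) : (a - r) ^ m = a ^ m - r := by
  have hpow (k : ℕ) : a ^ k * r = r := by
    induction k with
    | zero => simp
    | succ k ih => rw [pow_succ', mul_assoc, ih, har]
  induction m with
  | zero => exact absurd rfl hm
  | succ k ih =>
    rcases eq_or_ne k 0 with rfl | hk
    · simp
    rw [pow_succ, ih hk, sub_mul, mul_sub, mul_sub, hpow, hra, hr.eq, ← pow_succ]
    abel

section InnerProductSpace

variable {𝕜 E : Type*} [RCLike 𝕜] [NormedAddCommGroup E] [InnerProductSpace 𝕜 E]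
  [CompleteSpace E]

theorem IsStarProjection.norm_mul_le_of_norm_inner_le {p q : E →L[𝕜] E}
    (hp : IsStarProjection p) (hq : IsStarProjection q) {c : ℝ} (hc : 0 ≤ c)
    (h : ∀ v u, p v = v → q u = u → ‖inner 𝕜 v u‖ ≤ c * ‖v‖ * ‖u‖) : ‖p * q‖ ≤ c := by
  refine (p * q).opNorm_le_bound hc fun x => ?_
  set u := q x
  set v := p u
  have hu : q u = u := congr($(hq.isIdempotentElem.eq) x)
  have hv : p v = v := congr($(hp.isIdempotentElem.eq) u)
  have hvv : inner 𝕜 v v = inner 𝕜 v u :=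
    calc inner 𝕜 v v = inner 𝕜 (p v) u := (hp.isSelfAdjoint.isSymmetric v u).symm
      _ = inner 𝕜 v u := by rw [hv]
  have hvu : ‖v‖ ≤ c * ‖u‖ := by
    have hsq : ‖v‖ ^ 2 ≤ c * ‖u‖ * ‖v‖ :=
      calc ‖v‖ ^ 2 = ‖inner 𝕜 v v‖ := by rw [inner_self_eq_norm_sq_to_K]; simp
        _ ≤ c * ‖u‖ * ‖v‖ := by rw [hvv]; linarith [h v u hv hu]
    rcases (norm_nonneg v).eq_or_lt with hv0 | hv0
    · rw [← hv0]; positivity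
    · nlinarith
  calc ‖(p * q) x‖ = ‖v‖ := rfl
    _ ≤ c * ‖u‖ := hvu
    _ ≤ c * ‖x‖ := by gcongr; simpa using q.le_of_opNorm_le (hq.norm_le q) x

theorem IsStarProjection.norm_mul_pow_sub_le {p q r : E →L[𝕜] E}
    (hp : IsStarProjection p) (hq : IsStarProjection q) (hr : IsStarProjection r)
    (hpr : p * r = r) (hqr : q * r = r) {c : ℝ} (hc : 0 ≤ c)
    (h : ∀ v u, p v = v → r v = 0 → q u = u → r u = 0 → ‖inner 𝕜 v u‖ ≤ c * ‖v‖ * ‖u‖)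
    {m : ℕ} (hm : m ≠ 0) : ‖(p * q) ^ m - r‖ ≤ c ^ m := by
  have hrp : r * p = r := by
    simpa [hp.isSelfAdjoint.star_eq, hr.isSelfAdjoint.star_eq] using congr(star $hpr)
  have hrq : r * q = r := by
    simpa [hq.isSelfAdjoint.star_eq, hr.isSelfAdjoint.star_eq] using congr(star $hqr)
  have fixed_of_sub_fixed {a : E →L[𝕜] E} (ha : IsIdempotentElem a) (har : a * r = r)
      (hra : r * a = r) {v : E} (hv : (a - r) v = v) : a v = v ∧ r v = 0 :=
    ⟨calc a v = (a * (a - r)) v := congrArg a hv.symm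
        _ = v := by rw [mul_sub, ha.eq, har, hv],
      calc r v = (r * (a - r)) v := congrArg r hv.symm
        _ = 0 := by rw [mul_sub, hra, hr.isIdempotentElem.eq, sub_self]; rfl⟩
  have hcos : ‖(p - r) * (q - r)‖ ≤ c :=
    (hr.sub_of_mul_eq_right hp hpr).norm_mul_le_of_norm_inner_le
      (hr.sub_of_mul_eq_right hq hqr) hc fun v u hv hu =>
        h v u (fixed_of_sub_fixed hp.isIdempotentElem hpr hrp hv).1
          (fixed_of_sub_fixed hp.isIdempotentElem hpr hrp hv).2
          (fixed_of_sub_fixed hq.isIdempotentElem hqr hrq hu).1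
          (fixed_of_sub_fixed hq.isIdempotentElem hqr hrq hu).2
  have hfactor : (p - r) * (q - r) = p * q - r := by
    simp only [mul_sub, sub_mul, hpr, hrq, hr.isIdempotentElem.eq]
    abel
  calc ‖(p * q) ^ m - r‖ = ‖((p - r) * (q - r)) ^ m‖ := by
        rw [hfactor, hr.isIdempotentElem.sub_pow_eq (by rw [mul_assoc, hqr, hpr])
          (by rw [← mul_assoc, hrp, hrq]) hm]
    _ ≤ ‖(p - r) * (q - r)‖ ^ m := norm_pow_le' _ (Nat.pos_of_ne_zero hm)
    _ ≤ c ^ m := pow_le_pow_left₀ (norm_nonneg _) hcos m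

end InnerProductSpace

namespace Matrix

theorem mul_eq_right_of_mulVec_eq {ι α : Type*} [Fintype ι] [Semiring α] {A B : Matrix ι ι α}
    (hB : B * B = B) (h : ∀ v, B *ᵥ v = v → A *ᵥ v = v) : A * B = B :=
  ext_iff_mulVec.2 fun v => by
    rw [← mulVec_mulVec]
    exact h _ (by rw [mulVec_mulVec, hB])

variable {ι 𝕜 : Type*} [Fintype ι] [DecidableEq ι] [RCLike 𝕜]

theorem IsHermitian.isStarProjection_toEuclideanCLM {A : Matrix ι ι 𝕜} (hA : A.IsHermitian)
    (hAA : A * A = A) : IsStarProjection (toEuclideanCLM (n := ι) (𝕜 := 𝕜) A) :=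
  (⟨hAA, hA.isSelfAdjoint⟩ : IsStarProjection A).map _

theorem toEuclideanCLM_apply_eq_iff (A : Matrix ι ι 𝕜) (v w : EuclideanSpace 𝕜 ι) :
    toEuclideanCLM (n := ι) (𝕜 := 𝕜) A v = w ↔ A *ᵥ ofLp v = ofLp w := by
  rw [← (ofLp_injective 2).eq_iff, ofLp_toEuclideanCLM]

theorem norm_mul_pow_sub_le {A B C : Matrix ι ι 𝕜}
    (hA : A.IsHermitian) (hAA : A * A = A) (hB : B.IsHermitian) (hBB : B * B = B)
    (hC : C.IsHermitian) (hCC : C * C = C) (hAC : A * C = C) (hBC : B * C = C)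
    {c : ℝ} (hc : 0 ≤ c)
    (h : ∀ v u : ι → 𝕜, A *ᵥ v = v → C *ᵥ v = 0 → B *ᵥ u = u → C *ᵥ u = 0 →
      ‖star v ⬝ᵥ u‖ ≤ c * √(RCLike.re (star v ⬝ᵥ v)) * √(RCLike.re (star u ⬝ᵥ u)))
    {m : ℕ} (hm : m ≠ 0) : ‖(A * B) ^ m - C‖ ≤ c ^ m := by
  have hcos (v u : EuclideanSpace 𝕜 ι) : ‖inner 𝕜 v u‖ = ‖star (ofLp v) ⬝ᵥ ofLp u‖ := by
    rw [EuclideanSpace.inner_eq_star_dotProduct, dotProduct_comm]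
  have hnorm (v : EuclideanSpace 𝕜 ι) : ‖v‖ = √(RCLike.re (star (ofLp v) ⬝ᵥ ofLp v)) := by
    rw [norm_eq_sqrt_re_inner (𝕜 := 𝕜), EuclideanSpace.inner_eq_star_dotProduct, dotProduct_comm]
  rw [cstar_norm_def, map_sub, map_pow, map_mul]
  refine (hA.isStarProjection_toEuclideanCLM hAA).norm_mul_pow_sub_le
    (hB.isStarProjection_toEuclideanCLM hBB) (hC.isStarProjection_toEuclideanCLM hCC)
    (by rw [← map_mul, hAC]) (by rw [← map_mul, hBC]) hc (fun v u hv hcv hu hcu => ?_) hm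
  rw [toEuclideanCLM_apply_eq_iff] at hv hcv hu hcu
  rw [hcos, hnorm, hnorm]
  exact h _ _ hv hcv hu hcu

end Matrix

theorem stmt17_general {n : ℕ} (c : ℝ) (hc0 : 0 ≤ c)
    (P Q R : Matrix (Fin n) (Fin n) ℂ)
    (hP : P.IsHermitian) (hPp : P * P = P)
    (hQ : Q.IsHermitian) (hQp : Q * Q = Q)
    (hR : R.IsHermitian) (hRp : R * R = R)
    (hRrange : ∀ v : Fin n → ℂ, (P.mulVec v = v ∧ Q.mulVec v = v) ↔ R.mulVec v = v)
    (hangle : ∀ v u : Fin n → ℂ, P.mulVec v = v → R.mulVec v = 0 →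
        Q.mulVec u = u → R.mulVec u = 0 →
        ‖star v ⬝ᵥ u‖ ≤ c * Real.sqrt (star v ⬝ᵥ v).re * Real.sqrt (star u ⬝ᵥ u).re) :
    ∀ m : ℕ, 1 ≤ m → ‖(P * Q) ^ m - R‖ ≤ c ^ m := by
  intro m hm
  have hPR : P * R = R := mul_eq_right_of_mulVec_eq hRp fun v hv => ((hRrange v).2 hv).1
  have hQR : Q * R = R := mul_eq_right_of_mulVec_eq hRp fun v hv => ((hRrange v).2 hv).2
  exact norm_mul_pow_sub_le hP hPp hQ hQp hR hRp hPR hQR hc0 (by simpa using hangle) (by omega)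

/-- Quantitative alternating projection convergence: if `P, Q` are orthogonal
projections, `R` is the orthogonal projection onto `ran P ∩ ran Q`, and the
Friedrichs-angle cosine between `ran P` and `ran Q` modulo their intersection is at
most `c < 1`, then `‖(PQ)^m − R‖ ≤ c^m` for all `m ≥ 1`. -/
theorem stmt17 {n : ℕ} (c : ℝ) (hc0 : 0 ≤ c) (hc1 : c < 1)
    (P Q R : Matrix (Fin n) (Fin n) ℂ)
    (hP : P.IsHermitian) (hPp : P * P = P)
    (hQ : Q.IsHermitian) (hQp : Q * Q = Q)
    (hR : R.IsHermitian) (hRp : R * R = R)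
    (hRrange : ∀ v : Fin n → ℂ, (P.mulVec v = v ∧ Q.mulVec v = v) ↔ R.mulVec v = v)
    (hangle : ∀ v u : Fin n → ℂ, P.mulVec v = v → R.mulVec v = 0 →
        Q.mulVec u = u → R.mulVec u = 0 →
        ‖star v ⬝ᵥ u‖ ≤ c * Real.sqrt (star v ⬝ᵥ v).re * Real.sqrt (star u ⬝ᵥ u).re) :
    ∀ m : ℕ, 1 ≤ m → ‖(P * Q) ^ m - R‖ ≤ c ^ m :=
  stmt17_general c hc0 P Q R hP hPp hQ hQp hR hRp hRrange hangle
end
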